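/- arXiv:1410.8360 — 3 statements merged into one kernel-verified Lean document; each statement's English description precedes it below -/
import Mathlib

section
/- Hardy's inequality for sequences, first case: Let 0 < q ≤ ∞, 0 < μ ≤ q, β > 0 and C₀ > 0. Suppose {a_k}_{k≥0} and {b_k}_{k≥0} are sequences of real numbers such that |b_k| ≤ C₀·(Σ_{j=k}^∞ |a_j|^μ)^{1/μ} for every k ≥ 0. Then there exists a constant C > 0, depending only on q, μ, β, C₀ and not on the sequences, such that (Σ_{k=0}^∞ 2^{qkβ} |b_k|^q)^{1/q} ≤ C·(Σ_{k=0}^∞ 2^{qkβ} |a_k|^q)^{1/q} (with the usual supremum modification when q = ∞). -/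
open MeasureTheory ENNReal Filter
open scoped Classical

noncomputable section

/-- `ℓ_q` quasinorm of a family of extended nonnegative reals (supremum when `q = ∞`). -/
def lqNorm {ι : Type*} (q : ℝ≥0∞) (c : ι → ℝ≥0∞) : ℝ≥0∞ :=
  if q = ∞ then ⨆ i, c i else (∑' i, c i ^ q.toReal) ^ (1 / q.toReal)

/-- `L_p` quasinorm of an `ℝ≥0∞`-valued function (essential supremum when `p = ∞`). -/
def lpNormE {α : Type*} [MeasurableSpace α] (p : ℝ≥0∞) (μ : Measure α) (f : α → ℝ≥0∞) : ℝ≥0∞ :=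
  if p = ∞ then essSup f μ else (∫⁻ x, f x ^ p.toReal ∂μ) ^ (1 / p.toReal)

abbrev Rn (n : ℕ) := Fin n → ℝ

/-- Open cube centred at `x` of half-side `s` (i.e. `x + s·Iⁿ`). -/
def openCube {n : ℕ} (x : Rn n) (s : ℝ) : Set (Rn n) := {y | ∀ i, |y i - x i| < s}

/-- Open axis-parallel cube with lower corner `c` and side `s`. -/
def cubeAt {n : ℕ} (c : Rn n) (s : ℝ) : Set (Rn n) := {x | ∀ i, c i < x i ∧ x i < c i + s}

/-- Open dyadic cube `Q^n_{k,m}` of side `2^{-k}`. -/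
def dyadicCube (n k : ℕ) (m : Fin n → ℤ) : Set (Rn n) :=
  {x | ∀ i, (m i : ℝ) / 2 ^ k < x i ∧ x i < ((m i : ℝ) + 1) / 2 ^ k}

/-- Half-open dyadic cube `Q̃^n_{k,m}`. -/
def dyadicCubeHalf (n k : ℕ) (m : Fin n → ℤ) : Set (Rn n) :=
  {x | ∀ i, (m i : ℝ) / 2 ^ k ≤ x i ∧ x i < ((m i : ℝ) + 1) / 2 ^ k}

def dyadicCenter (n k : ℕ) (m : Fin n → ℤ) : Rn n := fun i => ((m i : ℝ) + 1 / 2) / 2 ^ k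

/-- The concentric dilate `c·Q^n_{k,m}` of a dyadic cube. -/
def dilatedCube (n k : ℕ) (m : Fin n → ℤ) (c : ℝ) : Set (Rn n) :=
  openCube (dyadicCenter n k m) (c / 2 ^ (k + 1))

def euclNorm {d : ℕ} (y : Rn d) : ℝ := Real.sqrt (∑ i, y i ^ 2)

/-- The difference `Δ^l(h)g(x)`. -/
def diffl {n : ℕ} (l : ℕ) (h : Rn n) (g : Rn n → ℝ) (x : Rn n) : ℝ :=
  ∑ j ∈ Finset.range (l + 1), ((l.choose j : ℝ) * (-1 : ℝ) ^ (l + j)) * g (x + (j : ℝ) • h)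

/-- The difference `Δ^l(h,Ω)g(x)`, vanishing unless the segment `[x, x + l·h]` lies in `Ω`. -/
def difflOn {n : ℕ} (l : ℕ) (Ω : Set (Rn n)) (h : Rn n) (g : Rn n → ℝ) (x : Rn n) : ℝ :=
  if ∀ τ ∈ Set.Icc (0 : ℝ) 1, x + (τ * l) • h ∈ Ω then diffl l h g x else 0

/-- `δ^l_r(Q)g`, where `s` is the side length of the cube `Q`. -/
def deltaE (n l : ℕ) (r : ℝ≥0∞) (s : ℝ) (Q : Set (Rn n)) (g : Rn n → ℝ) : ℝ≥0∞ :=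
  ENNReal.ofReal s ^ (-(2 * (n : ℝ)) / r.toReal) *
    eLpNorm (fun hx : Rn n × Rn n => diffl l hx.1 g hx.2) r
      ((volume.restrict (openCube (0 : Rn n) s)).prod (volume.restrict Q))

/-- `δ^l_r(Q,Ω)g`, where `s` is the side length of the cube `Q`. -/
def deltaEOn (n l : ℕ) (r : ℝ≥0∞) (s : ℝ) (Q Ω : Set (Rn n)) (g : Rn n → ℝ) : ℝ≥0∞ :=
  ENNReal.ofReal s ^ (-(2 * (n : ℝ)) / r.toReal) *
    eLpNorm (fun hx : Rn n × Rn n => difflOn l Ω hx.1 g hx.2) r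
      ((volume.restrict (openCube (0 : Rn n) s)).prod (volume.restrict Q))

/-- `Δ̄^l_r(s)g(x)`. -/
def barDelta (n l : ℕ) (r : ℝ≥0∞) (s : ℝ) (g : Rn n → ℝ) (x : Rn n) : ℝ≥0∞ :=
  ENNReal.ofReal s ^ (-(n : ℝ) / r.toReal) *
    eLpNorm (fun h : Rn n => diffl l h g x) r (volume.restrict (openCube (0 : Rn n) s))

/-- Membership in `L_r^{loc}(ℝⁿ)`. -/
def MemLrLoc (n : ℕ) (r : ℝ≥0∞) (φ : Rn n → ℝ) : Prop :=
  Measurable φ ∧ ∀ K : Set (Rn n), IsCompact K → eLpNorm φ r (volume.restrict K) < ∞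

def IsWeight {n : ℕ} (w : Rn n → ℝ) : Prop := Measurable w ∧ ∀ x, 0 < w x

/-- A `p`-admissible weight sequence. -/
def pAdmissible (n : ℕ) (p : ℝ≥0∞) (t : ℕ → Rn n → ℝ) : Prop :=
  ∀ k, IsWeight (t k) ∧ MemLrLoc n p (t k)

/-- The multiple sequence `t_{k,m} = ‖t_k‖_{L_p(Q^n_{k,m})}` associated with a weight sequence. -/
def tkm (n : ℕ) (p : ℝ≥0∞) (t : ℕ → Rn n → ℝ) (k : ℕ) (m : Fin n → ℤ) : ℝ≥0∞ :=
  eLpNorm (t k) p (volume.restrict (dyadicCube n k m))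

/-- The weight `t̄_k` built from a multiple sequence `T`. -/
def tbarOf (n : ℕ) (p : ℝ≥0∞) (T : ℕ → (Fin n → ℤ) → ℝ≥0∞) (k : ℕ) (x : Rn n) : ℝ≥0∞ :=
  (2 : ℝ≥0∞) ^ (((k * n : ℕ) : ℝ) / p.toReal) *
    ∑' m : Fin n → ℤ, (dyadicCubeHalf n k m).indicator (fun _ => T k m) x

/-- `(2^{kn} ∫_Q f^e)^{1/e}`, with the essential supremum modification for `e = ∞`. -/
def avgNorm (n k : ℕ) (e : ℝ≥0∞) (Q : Set (Rn n)) (f : Rn n → ℝ≥0∞) : ℝ≥0∞ :=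
  if e = ∞ then essSup f (volume.restrict Q)
  else ((2 : ℝ≥0∞) ^ (k * n) * ∫⁻ x in Q, f x ^ e.toReal) ^ (1 / e.toReal)

/-- Conditions (2.14)–(2.16) of the class `X^{α₃}_{α,σ,p}`, expressed for a multiple
sequence `T`. -/
def MemXseq (n : ℕ) (α₁ α₂ α₃ : ℝ) (σ₁ σ₂ p : ℝ≥0∞) (T : ℕ → (Fin n → ℤ) → ℝ≥0∞) : Prop :=
  (∃ C₁ : ℝ≥0∞, 0 < C₁ ∧ C₁ < ∞ ∧ ∀ k j : ℕ, k ≤ j → ∀ m : Fin n → ℤ,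
    avgNorm n k p (dyadicCube n k m) (tbarOf n p T k) *
      avgNorm n k σ₁ (dyadicCube n k m) (fun x => (tbarOf n p T j x)⁻¹) ≤
      C₁ * (2 : ℝ≥0∞) ^ (α₁ * ((k : ℝ) - (j : ℝ)))) ∧
  (∃ C₂ : ℝ≥0∞, 0 < C₂ ∧ C₂ < ∞ ∧ ∀ k j : ℕ, k ≤ j → ∀ m : Fin n → ℤ,
    (avgNorm n k p (dyadicCube n k m) (tbarOf n p T k))⁻¹ *
      avgNorm n k σ₂ (dyadicCube n k m) (tbarOf n p T j) ≤
      C₂ * (2 : ℝ≥0∞) ^ (α₂ * ((j : ℝ) - (k : ℝ)))) ∧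
  (∀ k : ℕ, ∀ m m' : Fin n → ℤ, (∀ i, |m i - m' i| ≤ 1) →
    0 < T k m ∧ T k m ≤ (2 : ℝ≥0∞) ^ (α₃ : ℝ) * T k m')

/-- The weighted class `X^{α₃}_{α,σ,p}` of weight sequences. -/
def MemX (n : ℕ) (α₁ α₂ α₃ : ℝ) (σ₁ σ₂ p : ℝ≥0∞) (t : ℕ → Rn n → ℝ) : Prop :=
  pAdmissible n p t ∧ MemXseq n α₁ α₂ α₃ σ₁ σ₂ p (tkm n p t)

/-- Quasinorm of `B̃^l_{p,q,r}(ℝⁿ, T)` with an `ℝ≥0∞`-valued weight sequence `T`. -/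
def tildeBnormE (n l : ℕ) (p q r : ℝ≥0∞) (T : ℕ → Rn n → ℝ≥0∞) (φ : Rn n → ℝ) : ℝ≥0∞ :=
  lqNorm q (fun k : ℕ =>
    lpNormE p volume (fun x =>
      T (k + 1) x *
        deltaE n l r ((2 : ℝ) ^ (1 - ((k : ℤ) + 1))) (openCube x ((2 : ℝ) ^ (-((k : ℤ) + 1)))) φ)) +
  lpNormE p volume (fun x => T 0 x * eLpNorm φ r (volume.restrict (openCube x 1)))

/-- Quasinorm of `B̃^l_{p,q,r}(ℝⁿ, {t_k})`. -/
def tildeBnorm (n l : ℕ) (p q r : ℝ≥0∞) (t : ℕ → Rn n → ℝ) (φ : Rn n → ℝ) : ℝ≥0∞ :=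
  tildeBnormE n l p q r (fun k x => ENNReal.ofReal (t k x)) φ

/-- Membership in `B̃^l_{p,q,r}(ℝⁿ, {t_k})`. -/
def MemTildeB (n l : ℕ) (p q r : ℝ≥0∞) (t : ℕ → Rn n → ℝ) (φ : Rn n → ℝ) : Prop :=
  MemLrLoc n r φ ∧ tildeBnorm n l p q r t φ < ∞

/-- Quasinorm of `B̄^l_{p,q,r}(ℝⁿ, {t_k})`. -/
def barBnorm (n l : ℕ) (p q r : ℝ≥0∞) (t : ℕ → Rn n → ℝ) (φ : Rn n → ℝ) : ℝ≥0∞ :=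
  lqNorm q (fun k : ℕ =>
    lpNormE p volume (fun x =>
      ENNReal.ofReal (t (k + 1) x) * barDelta n l r ((2 : ℝ) ^ (-((k : ℤ) + 1))) φ x)) +
  lpNormE p volume (fun x => ENNReal.ofReal (t 0 x) * eLpNorm φ r (volume.restrict (openCube x 1)))

/-- Membership in `B̄^l_{p,q,r}(ℝⁿ, {t_k})`. -/
def MemBarB (n l : ℕ) (p q r : ℝ≥0∞) (t : ℕ → Rn n → ℝ) (φ : Rn n → ℝ) : Prop :=
  MemLrLoc n r φ ∧ barBnorm n l p q r t φ < ∞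

/-- The class `A^{loc}_∞`. -/
def MemAlocInfty (n : ℕ) (w : Rn n → ℝ) : Prop :=
  ∃ α : ℝ, α ∈ Set.Ioo (0 : ℝ) 1 ∧ ∃ M : ℝ≥0∞, M < ∞ ∧
    ∀ (c : Rn n) (s : ℝ), 0 < s → s ≤ 1 →
      ∀ F : Set (Rn n), F ⊆ cubeAt c s → MeasurableSet F →
        ENNReal.ofReal α * volume (cubeAt c s) ≤ volume F →
        (∫⁻ x in cubeAt c s, ENNReal.ofReal (w x)) ≤ M * ∫⁻ x in F, ENNReal.ofReal (w x)

/-- The class `A^{loc}_1`. -/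
def MemAloc1 (n : ℕ) (w : Rn n → ℝ) : Prop :=
  ∃ C : ℝ≥0∞, C < ∞ ∧ ∀ (c : Rn n) (s : ℝ), 0 < s → s ≤ 1 →
    ∀ᵐ x ∂volume.restrict (cubeAt c s),
      (∫⁻ y in cubeAt c s, ENNReal.ofReal (w y)) ≤ C * volume (cubeAt c s) * ENNReal.ofReal (w x)

/-- The class `A^{loc}_{p₀}` for `p₀ > 1`. -/
def MemAlocGt (n : ℕ) (p₀ : ℝ) (w : Rn n → ℝ) : Prop :=
  ∃ C : ℝ≥0∞, C < ∞ ∧ ∀ (c : Rn n) (s : ℝ), 0 < s → s ≤ 1 →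
    ((volume (cubeAt c s))⁻¹ * ∫⁻ y in cubeAt c s, ENNReal.ofReal (w y)) *
      ((volume (cubeAt c s))⁻¹ *
        ∫⁻ y in cubeAt c s, ENNReal.ofReal (w y) ^ (-(1 : ℝ) / (p₀ - 1))) ^ (p₀ - 1) ≤ C

/-- The class `A^{loc}_{p₀}` for `p₀ ∈ [1,∞)`. -/
def MemAlocP (n : ℕ) (p₀ : ℝ) (w : Rn n → ℝ) : Prop :=
  if p₀ = 1 then MemAloc1 n w else MemAlocGt n p₀ w

/-- The class `{}^{loc}Y^{α₃}_{α₁,α₂}` of weight sequences of variable smoothness. -/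
def MemLocY (n : ℕ) (α₁ α₂ α₃ : ℝ) (s : ℕ → Rn n → ℝ) : Prop :=
  (∀ k, IsWeight (s k)) ∧
  (∃ C : ℝ, 0 < C ∧ ∀ j k : ℕ, j ≤ k → ∀ x : Rn n,
    C⁻¹ * (2 : ℝ) ^ (α₁ * ((k : ℝ) - (j : ℝ))) ≤ s k x / s j x ∧
      s k x / s j x ≤ C * (2 : ℝ) ^ (α₂ * ((k : ℝ) - (j : ℝ)))) ∧
  (∀ k : ℕ, ∀ x y : Rn n, euclNorm (x - y) ≤ (2 : ℝ) ^ (-(k : ℤ)) →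
    s k x ≤ (2 : ℝ) ^ α₃ * s k y)

/-- The set `Ξ^{d,n}_{k,m} = Q^n_{k,m} × (2^{-k}B^d ∖ 2^{-k-1}B^d) ⊂ ℝ^{n+d}`. -/
def Xi (n d k : ℕ) (m : Fin n → ℤ) : Set (Rn (n + d)) :=
  {z | (fun i => z (Fin.castAdd d i)) ∈ dyadicCube n k m ∧
       euclNorm (fun i : Fin d => z (Fin.natAdd n i)) < (2 : ℝ) ^ (-(k : ℤ)) ∧
       (2 : ℝ) ^ (-(k : ℤ) - 1) ≤ euclNorm (fun i : Fin d => z (Fin.natAdd n i))}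

/-- The multiple sequence `γ̂_{k,m} = ‖γ‖_{L_p(Ξ^{d,n}_{k,m})}` generated by a weight `γ`. -/
def gammaHat (n d : ℕ) (p : ℝ≥0∞) (γ : Rn (n + d) → ℝ) (k : ℕ) (m : Fin n → ℤ) : ℝ≥0∞ :=
  eLpNorm γ p (volume.restrict (Xi n d k m))

def delta1Good (n d : ℕ) (p : ℝ≥0∞) (γ : Rn (n + d) → ℝ) (δ : ℝ) : Prop :=
  ∃ C : ℝ≥0∞, C < ∞ ∧ ∀ k j : ℕ, k ≤ j → ∀ m : Fin n → ℤ,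
    (∑' m' : {m' : Fin n → ℤ // dyadicCube n j m' ⊆ dyadicCube n k m},
        gammaHat n d p γ j m'.1 ^ p.toReal) ≤
      C * (2 : ℝ≥0∞) ^ ((((k : ℝ) - (j : ℝ)) * (d : ℝ)) * δ) * gammaHat n d p γ k m ^ p.toReal

/-- `δ₁(γ,n,d)`. -/
def delta1 (n d : ℕ) (p : ℝ≥0∞) (γ : Rn (n + d) → ℝ) : ℝ :=
  sSup {δ : ℝ | 0 < δ ∧ delta1Good n d p γ δ}

def delta2Good (n d : ℕ) (p : ℝ≥0∞) (γ : Rn (n + d) → ℝ) (δ : ℝ) : Prop :=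
  ∃ C : ℝ≥0∞, C < ∞ ∧ ∀ k j : ℕ, k ≤ j → ∀ m : Fin n → ℤ,
    ∀ G : Set (Fin n → ℤ), (∀ m' ∈ G, dyadicCube n j m' ⊆ dyadicCube n k m) →
      (∑' m' : G, gammaHat n d p γ j m'.1 ^ p.toReal) ≤
        C * (volume (⋃ m' ∈ G, dyadicCube n j m') / volume (dyadicCube n k m)) ^ δ *
          ∑' m' : {m' : Fin n → ℤ // dyadicCube n j m' ⊆ dyadicCube n k m},
            gammaHat n d p γ j m'.1 ^ p.toReal

/-- `δ₂(γ,n,d)`. -/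
def delta2 (n d : ℕ) (p : ℝ≥0∞) (γ : Rn (n + d) → ℝ) : ℝ :=
  sSup {δ : ℝ | 0 < δ ∧ delta2Good n d p γ δ}

/-- The cardinal B-spline of degree `deg` with knots `0, 1, …, deg + 1`. -/
def cardB : ℕ → ℝ → ℝ
  | 0, x => if 0 ≤ x ∧ x < 1 then 1 else 0
  | (d + 1), x => (x / (d + 1)) * cardB d x + (((d : ℝ) + 2 - x) / (d + 1)) * cardB d (x - 1)

/-- The tensor-product B-spline `N^{deg}_{k,m}` on `ℝⁿ`. -/
def Bspl (n deg k : ℕ) (m : Fin n → ℤ) (x : Rn n) : ℝ :=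
  ∏ i, cardB deg (2 ^ k * x i - (m i : ℝ))

/-- The spline `Σ_m β_m N^{deg}_{k,m}`. -/
def splineSum (n deg k : ℕ) (β : (Fin n → ℤ) → ℝ) (x : Rn n) : ℝ :=
  ∑' m, β m * Bspl n deg k m x

/-- A dyadic spline of degree `deg` (an element of `Σ^{deg} = ⋃_k Σ^{deg}_k`). -/
def IsSplineFn (n deg : ℕ) (S : Rn n → ℝ) : Prop :=
  ∃ (k : ℕ) (β : (Fin n → ℤ) → ℝ), S = splineSum n deg k β

/-- The weighted best spline approximation `s_k(φ)` by splines of degree `deg`. -/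
def sApprox (n deg : ℕ) (p r : ℝ≥0∞) (T : ℕ → (Fin n → ℤ) → ℝ≥0∞) (φ : Rn n → ℝ) (k : ℕ) :
    ℝ≥0∞ :=
  ⨅ β : (Fin n → ℤ) → ℝ,
    lqNorm p (fun m => T k m *
      eLpNorm (fun x => φ x - splineSum n deg k β x) r (volume.restrict (dyadicCube n k m)))

/-- `s_j(φ)` for `j ∈ {-1, 0, 1, 2, …}`, including the term `s_{-1}`. -/
def sApproxZ (n deg : ℕ) (p r : ℝ≥0∞) (T : ℕ → (Fin n → ℤ) → ℝ≥0∞) (φ : Rn n → ℝ) (j : ℤ) :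
    ℝ≥0∞ :=
  if j < 0 then
    lqNorm p (fun m => T 0 m * eLpNorm φ r (volume.restrict (dyadicCube n 0 m)))
  else sApprox n deg p r T φ j.toNat

/-- Local best polynomial approximation `E_l(φ,Q)_r` by polynomials of total degree `< l`. -/
def bestApproxE (n l : ℕ) (r : ℝ≥0∞) (φ : Rn n → ℝ) (Q : Set (Rn n)) : ℝ≥0∞ :=
  ⨅ P : {P : MvPolynomial (Fin n) ℝ // P.totalDegree < l},
    eLpNorm (fun x => φ x - MvPolynomial.eval x P.1) r (volume.restrict Q)

/-- The modulus of continuity `ω_l(φ,Q)_r`. -/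
def modulusE (n l : ℕ) (r : ℝ≥0∞) (φ : Rn n → ℝ) (Q : Set (Rn n)) : ℝ≥0∞ :=
  ⨆ h : Rn n, eLpNorm (difflOn l Q h φ) r (volume : Measure (Rn n))

def partialDeriv {N : ℕ} (i : Fin N) (ψ : Rn N → ℝ) : Rn N → ℝ :=
  fun x => fderiv ℝ ψ x (Pi.single i 1)

def iterPD {N : ℕ} : List (Fin N) → (Rn N → ℝ) → Rn N → ℝ
  | [], ψ => ψ
  | i :: L, ψ => partialDeriv i (iterPD L ψ)

def multiIdxList {N : ℕ} (α : Fin N → ℕ) : List (Fin N) :=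
  (List.finRange N).foldr (fun i L => List.replicate (α i) i ++ L) []

/-- Iterated partial derivative `D^α`. -/
def multiDeriv {N : ℕ} (α : Fin N → ℕ) (ψ : Rn N → ℝ) : Rn N → ℝ :=
  iterPD (multiIdxList α) ψ

/-- `g` is the weak (Sobolev) derivative `D^α f`. -/
def IsWeakDeriv {N : ℕ} (α : Fin N → ℕ) (f g : Rn N → ℝ) : Prop :=
  ∀ ψ : Rn N → ℝ, ContDiff ℝ (⊤ : ℕ∞) ψ → HasCompactSupport ψ →
    ∫ x, f x * multiDeriv α ψ x = (-1 : ℝ) ^ (∑ i, α i) * ∫ x, g x * ψ x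

/-- The weighted Sobolev norm `Σ_{|α| ≤ l} ‖γ · D^α f‖_{L_p}` computed from a system `D` of
weak derivatives. -/
def sobNorm (N : ℕ) (p : ℝ≥0∞) (l : ℕ) (γ : Rn N → ℝ) (D : (Fin N → ℕ) → Rn N → ℝ) : ℝ≥0∞ :=
  ∑' α : Fin N → ℕ,
    if (∑ i, α i) ≤ l then eLpNorm (fun x => γ x * D α x) p volume else 0

/-- Membership in the weighted Sobolev space `W^l_p(ℝ^N, γ)`, witnessed by the system `D`
of weak derivatives of `f`. -/
def MemW (N : ℕ) (p : ℝ≥0∞) (l : ℕ) (γ : Rn N → ℝ) (f : Rn N → ℝ)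
    (D : (Fin N → ℕ) → Rn N → ℝ) : Prop :=
  MeasureTheory.LocallyIntegrable f volume ∧ D 0 = f ∧
    (∀ α : Fin N → ℕ, (∑ i, α i) ≤ l →
      MeasureTheory.LocallyIntegrable (D α) volume ∧ IsWeakDeriv α f (D α)) ∧
    sobNorm N p l γ D < ∞

/-- `φ` is the trace of `f` on the plane `y = 0`. -/
def IsTraceSob {n d : ℕ} (f : Rn (n + d) → ℝ) (φ : Rn n → ℝ) : Prop :=
  ∃ f' : Rn (n + d) → ℝ, f' =ᵐ[volume] f ∧
    ∀ (c : Rn n) (s : ℝ), 0 < s →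
      Filter.Tendsto (fun y : Rn d => ∫ x in cubeAt c s, |f' (Fin.append x y) - φ x|)
        (nhds 0) (nhds 0)

/-- The weight sequence `γ_k(x) = 2^{k(l+n/p)} Σ_m χ_{Q̃^n_{k,m}}(x) γ̂_{k,m}`. -/
def gammaSeq (n d : ℕ) (p : ℝ≥0∞) (l : ℕ) (γ : Rn (n + d) → ℝ) (k : ℕ) (x : Rn n) : ℝ≥0∞ :=
  (2 : ℝ≥0∞) ^ ((k : ℝ) * ((l : ℝ) + (n : ℝ) / p.toReal)) *
    ∑' m : Fin n → ℤ, (dyadicCubeHalf n k m).indicator (fun _ => gammaHat n d p γ k m) x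

/-- Conjugate exponent in `ℝ≥0∞`. -/
def conjE (e : ℝ≥0∞) : ℝ≥0∞ := (1 - e⁻¹)⁻¹

/-- The exponent `p_θ`. -/
def pTheta (p θ : ℝ≥0∞) : ℝ≥0∞ := if θ = ∞ ∧ p = ∞ then 1 else p / θ

lemma two_rpow_ne_top (x : ℝ) : (2:ℝ≥0∞) ^ x ≠ ∞ := by
  rcases le_total 0 x with h | h
  · exact ENNReal.rpow_ne_top_of_nonneg h (by norm_num)
  · refine ne_top_of_le_ne_top one_ne_top ?_
    calc (2:ℝ≥0∞)^x ≤ 2^(0:ℝ) := ENNReal.rpow_le_rpow_of_exponent_le one_le_two h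
    _ = 1 := by simp

lemma two_rpow_ne_zero (x : ℝ) : (2:ℝ≥0∞) ^ x ≠ 0 :=
  (ENNReal.rpow_pos (by norm_num) (by norm_num)).ne'

def shiftEquiv' (k : ℕ) : ℕ ≃ {j : ℕ // k ≤ j} where
  toFun i := ⟨k + i, Nat.le_add_right k i⟩
  invFun j := j.1 - k
  left_inv i := by simp
  right_inv j := Subtype.ext (by simp [Nat.add_sub_cancel' j.2])

lemma tsum_subtype_ge (k : ℕ) (g : ℕ → ℝ≥0∞) :
    ∑' j : {j : ℕ // k ≤ j}, g j.1 = ∑' i : ℕ, g (k + i) :=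
  ((shiftEquiv' k).tsum_eq (fun j => g j.1)).symm

lemma tsum_mul_le_Lp_mul_Lq' {p q : ℝ} (hpq : p.HolderConjugate q) (f g : ℕ → ℝ≥0∞) :
    (∑' j, f j * g j) ≤ (∑' j, f j ^ p) ^ (1/p) * (∑' j, g j ^ q) ^ (1/q) := by
  have := ENNReal.lintegral_mul_le_Lp_mul_Lq (Measure.count : Measure ℕ) hpq
    (measurable_of_countable f).aemeasurable (measurable_of_countable g).aemeasurable
  simpa [lintegral_count] using this

lemma aux_geom {r : ℝ} (hr : 1 ≤ r) {θ : ℝ≥0∞} (hθ0 : θ ≠ 0) (hθ : θ < 1) (f : ℕ → ℝ≥0∞) :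
    (∑' j, θ ^ j * f j) ^ r ≤ (1 - θ)⁻¹ ^ r * ∑' j, θ ^ j * f j ^ r := by
  have hθtop : θ ≠ ∞ := (hθ.trans_le le_top).ne
  have hG1 : (1:ℝ≥0∞) ≤ (1-θ)⁻¹ := ENNReal.one_le_inv.mpr tsub_le_self
  rcases eq_or_lt_of_le hr with h1 | h1
  · rw [← h1]
    simp only [ENNReal.rpow_one]
    calc (∑' j, θ^j * f j) = 1 * ∑' j, θ^j * f j := (one_mul _).symm
    _ ≤ (1-θ)⁻¹ * ∑' j, θ^j * f j := mul_le_mul_left hG1 _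
  · have hrpos : 0 < r := lt_trans one_pos h1
    have hr0 : r ≠ 0 := hrpos.ne'
    set s := r/(r-1) with hs
    have hr1 : r - 1 ≠ 0 := sub_ne_zero.mpr (ne_of_gt h1)
    have hpq : r.HolderConjugate s := Real.holderConjugate_iff.mpr ⟨h1, by rw [hs]; field_simp; ring⟩
    have hs0 : s ≠ 0 := hpq.symm.ne_zero
    have key : ∀ j:ℕ, θ^j * f j = ((θ^j)^(1/s)) * ((θ^j)^(1/r) * f j) := by
      intro j
      rw [← mul_assoc, ← ENNReal.rpow_add _ _ (pow_ne_zero j hθ0) (ENNReal.pow_ne_top hθtop),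
        show 1/s + 1/r = 1 by rw [one_div, one_div, add_comm]; exact hpq.inv_add_inv_eq_one,
        ENNReal.rpow_one]
    calc (∑' j, θ^j * f j)^r = (∑' j, ((θ^j)^(1/s)) * ((θ^j)^(1/r) * f j))^r := by
          rw [tsum_congr key]
    _ ≤ ((∑' j, ((θ^j)^(1/s))^s)^(1/s) * (∑' j, ((θ^j)^(1/r) * f j)^r)^(1/r))^r :=
          ENNReal.rpow_le_rpow (tsum_mul_le_Lp_mul_Lq' hpq.symm _ _) hrpos.le
    _ = (((1-θ)⁻¹)^(1/s) * (∑' j, θ^j * f j ^ r)^(1/r))^r := by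
          have e1 : (∑' j:ℕ, ((θ^j)^(1/s))^s) = (1-θ)⁻¹ := by
            rw [← ENNReal.tsum_geometric θ]
            exact tsum_congr fun j => by
              rw [← ENNReal.rpow_mul, one_div_mul_cancel hs0, ENNReal.rpow_one]
          have e2 : (∑' j:ℕ, ((θ^j)^(1/r) * f j)^r) = ∑' j:ℕ, θ^j * f j^r :=
            tsum_congr fun j => by
              rw [ENNReal.mul_rpow_of_nonneg _ _ hrpos.le, ← ENNReal.rpow_mul,
                one_div_mul_cancel hr0, ENNReal.rpow_one]
          rw [e1, e2]
    _ = ((1-θ)⁻¹)^((1/s)*r) * ∑' j, θ^j * f j ^ r := by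
          rw [ENNReal.mul_rpow_of_nonneg _ _ hrpos.le, ← ENNReal.rpow_mul,
            ← ENNReal.rpow_mul, one_div_mul_cancel hr0, ENNReal.rpow_one]
    _ ≤ ((1-θ)⁻¹)^r * ∑' j, θ^j * f j ^ r := by
          refine mul_le_mul_left (ENNReal.rpow_le_rpow_of_exponent_le hG1 ?_) _
          rw [one_div_mul_eq_div, hpq.div_conj_eq_sub_one]
          linarith

lemma case_fin (q μ : ℝ≥0∞) (β : ℝ) (C₀ : ℝ≥0∞)
    (hq : 0 < q) (hμ0 : 0 < μ) (hμq : μ ≤ q) (hβ : 0 < β) (hC₀ : 0 < C₀) (hC₀' : C₀ < ∞)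
    (hq' : q ≠ ∞) :
    ∃ C : ℝ≥0∞, 0 < C ∧ C < ∞ ∧ ∀ a b : ℕ → ℝ,
      (∀ k : ℕ, ENNReal.ofReal |b k| ≤
        C₀ * lqNorm μ (fun j : {j : ℕ // k ≤ j} => ENNReal.ofReal |a j.1|)) →
      lqNorm q (fun k : ℕ => (2 : ℝ≥0∞) ^ ((k : ℝ) * β) * ENNReal.ofReal |b k|) ≤
        C * lqNorm q (fun k : ℕ => (2 : ℝ≥0∞) ^ ((k : ℝ) * β) * ENNReal.ofReal |a k|) := by
  have hμ' : μ ≠ ∞ := ne_top_of_le_ne_top hq' hμq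
  set Q := q.toReal with hQdef
  set M := μ.toReal with hMdef
  have hQ : 0 < Q := ENNReal.toReal_pos hq.ne' hq'
  have hM : 0 < M := ENNReal.toReal_pos hμ0.ne' hμ'
  have hMQ : M ≤ Q := (ENNReal.toReal_le_toReal hμ' hq').mpr hμq
  set r := Q / M with hrdef
  have hr1 : 1 ≤ r := (one_le_div hM).mpr hMQ
  have hr0 : (0:ℝ) ≤ r := le_trans zero_le_one hr1
  have hMr : M * r = Q := by rw [hrdef]; field_simp
  set θ := (2:ℝ≥0∞) ^ (-(β*M)) with hθdef
  have hθ0 : θ ≠ 0 := two_rpow_ne_zero _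
  have hθ1 : θ < 1 :=
    ENNReal.rpow_lt_one_of_one_lt_of_neg one_lt_two (by nlinarith)
  set G := (1-θ)⁻¹ with hGdef
  have hG0 : G ≠ 0 := ENNReal.inv_ne_zero.mpr (ne_top_of_le_ne_top one_ne_top tsub_le_self)
  have hGt : G ≠ ∞ := (ENNReal.inv_lt_top.mpr (tsub_pos_iff_lt.mpr hθ1)).ne
  set K := C₀^Q * G^r * G with hK
  have hK0 : K ≠ 0 :=
    mul_ne_zero (mul_ne_zero (ENNReal.rpow_pos hC₀ hC₀'.ne).ne'
      (ENNReal.rpow_pos (pos_iff_ne_zero.mpr hG0) hGt).ne') hG0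
  have hKt : K ≠ ∞ := ENNReal.mul_ne_top
    (ENNReal.mul_ne_top (ENNReal.rpow_ne_top_of_nonneg hQ.le hC₀'.ne)
      (ENNReal.rpow_ne_top_of_nonneg hr0 hGt)) hGt
  refine ⟨K ^ (1/Q), ENNReal.rpow_pos (pos_iff_ne_zero.mpr hK0) hKt,
    ENNReal.rpow_lt_top_of_nonneg (by positivity) hKt, ?_⟩
  intro a b hab
  simp only [lqNorm, if_neg hq', if_neg hμ'] at hab ⊢
  have key : ∀ k : ℕ, ((2:ℝ≥0∞)^((k:ℝ)*β) * ENNReal.ofReal |b k|)^Q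
      ≤ C₀^Q * G^r * ∑' i:ℕ, θ^i *
          ((2:ℝ≥0∞)^(((k+i:ℕ):ℝ)*β) * ENNReal.ofReal |a (k+i)|)^Q := by
    intro k
    have h2 : (ENNReal.ofReal |b k|)^M ≤ C₀^M * ∑' i:ℕ, (ENNReal.ofReal |a (k+i)|)^M := by
      calc (ENNReal.ofReal |b k|)^M
          ≤ (C₀ * (∑' j : {j : ℕ // k ≤ j}, (ENNReal.ofReal |a j.1|)^M)^(1/M))^M :=
            ENNReal.rpow_le_rpow (hab k) hM.le
      _ = C₀^M * ∑' i:ℕ, (ENNReal.ofReal |a (k+i)|)^M := by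
          rw [ENNReal.mul_rpow_of_nonneg _ _ hM.le, ← ENNReal.rpow_mul,
            one_div_mul_cancel hM.ne', ENNReal.rpow_one,
            tsum_subtype_ge k (fun n => (ENNReal.ofReal |a n|)^M)]
    have hterm : ∀ i:ℕ, θ^i * ((2:ℝ≥0∞)^(((k+i:ℕ):ℝ)*β) * ENNReal.ofReal |a (k+i)|)^M
        = (2:ℝ≥0∞)^((k:ℝ)*β*M) * (ENNReal.ofReal |a (k+i)|)^M := by
      intro i
      rw [ENNReal.mul_rpow_of_nonneg _ _ hM.le, ← mul_assoc, ← ENNReal.rpow_natCast θ i,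
        hθdef, ← ENNReal.rpow_mul, ← ENNReal.rpow_mul,
        ← ENNReal.rpow_add _ _ (by norm_num) ENNReal.ofNat_ne_top]
      congr 2
      push_cast
      ring
    have h3 : (2:ℝ≥0∞)^((k:ℝ)*β*M) * (ENNReal.ofReal |b k|)^M
        ≤ C₀^M * ∑' i:ℕ, θ^i *
            ((2:ℝ≥0∞)^(((k+i:ℕ):ℝ)*β) * ENNReal.ofReal |a (k+i)|)^M := by
      calc (2:ℝ≥0∞)^((k:ℝ)*β*M) * (ENNReal.ofReal |b k|)^M
          ≤ (2:ℝ≥0∞)^((k:ℝ)*β*M) * (C₀^M * ∑' i:ℕ, (ENNReal.ofReal |a (k+i)|)^M) :=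
            mul_le_mul_right h2 _
      _ = C₀^M * ∑' i:ℕ, (2:ℝ≥0∞)^((k:ℝ)*β*M) * (ENNReal.ofReal |a (k+i)|)^M := by
          rw [← mul_assoc, mul_comm ((2:ℝ≥0∞)^((k:ℝ)*β*M)) (C₀^M), mul_assoc,
            ← ENNReal.tsum_mul_left]
      _ = C₀^M * ∑' i:ℕ, θ^i *
            ((2:ℝ≥0∞)^(((k+i:ℕ):ℝ)*β) * ENNReal.ofReal |a (k+i)|)^M := by
          rw [tsum_congr (fun i => (hterm i).symm)]
    calc ((2:ℝ≥0∞)^((k:ℝ)*β) * ENNReal.ofReal |b k|)^Q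
        = ((2:ℝ≥0∞)^((k:ℝ)*β*M) * (ENNReal.ofReal |b k|)^M)^r := by
          rw [← hMr, ENNReal.rpow_mul]
          congr 1
          rw [ENNReal.mul_rpow_of_nonneg _ _ hM.le, ← ENNReal.rpow_mul]
    _ ≤ (C₀^M * ∑' i:ℕ, θ^i *
            ((2:ℝ≥0∞)^(((k+i:ℕ):ℝ)*β) * ENNReal.ofReal |a (k+i)|)^M)^r :=
          ENNReal.rpow_le_rpow h3 hr0
    _ = C₀^Q * (∑' i:ℕ, θ^i *
            ((2:ℝ≥0∞)^(((k+i:ℕ):ℝ)*β) * ENNReal.ofReal |a (k+i)|)^M)^r := by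
          rw [ENNReal.mul_rpow_of_nonneg _ _ hr0, ← ENNReal.rpow_mul, hMr]
    _ ≤ C₀^Q * (G^r * ∑' i:ℕ, θ^i *
            (((2:ℝ≥0∞)^(((k+i:ℕ):ℝ)*β) * ENNReal.ofReal |a (k+i)|)^M)^r) :=
          mul_le_mul_right (aux_geom hr1 hθ0 hθ1 _) _
    _ = C₀^Q * G^r * ∑' i:ℕ, θ^i *
            ((2:ℝ≥0∞)^(((k+i:ℕ):ℝ)*β) * ENNReal.ofReal |a (k+i)|)^Q := by
          rw [← mul_assoc]
          congr 1
          exact tsum_congr fun i => by rw [← ENNReal.rpow_mul, hMr]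
  have glob : (∑' k:ℕ, ((2:ℝ≥0∞)^((k:ℝ)*β) * ENNReal.ofReal |b k|)^Q)
      ≤ K * ∑' k:ℕ, ((2:ℝ≥0∞)^((k:ℝ)*β) * ENNReal.ofReal |a k|)^Q := by
    set g : ℕ → ℝ≥0∞ := fun k => ((2:ℝ≥0∞)^((k:ℝ)*β) * ENNReal.ofReal |a k|)^Q with hg
    calc (∑' k:ℕ, ((2:ℝ≥0∞)^((k:ℝ)*β) * ENNReal.ofReal |b k|)^Q)
        ≤ ∑' k:ℕ, C₀^Q * G^r * ∑' i:ℕ, θ^i * g (k+i) := ENNReal.tsum_le_tsum key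
    _ = C₀^Q * G^r * ∑' k:ℕ, ∑' i:ℕ, θ^i * g (k+i) := ENNReal.tsum_mul_left
    _ = C₀^Q * G^r * ∑' i:ℕ, ∑' k:ℕ, θ^i * g (k+i) := by rw [ENNReal.tsum_comm]
    _ = C₀^Q * G^r * ∑' i:ℕ, θ^i * ∑' k:ℕ, g (k+i) := by
          rw [tsum_congr (fun i => ENNReal.tsum_mul_left (a := θ^i) (f := fun k => g (k+i)))]
    _ ≤ C₀^Q * G^r * ∑' i:ℕ, θ^i * ∑' k:ℕ, g k :=
          mul_le_mul_right (ENNReal.tsum_le_tsum fun i =>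
            mul_le_mul_right (tsum_comp_le_tsum_of_injective (add_left_injective i) g) _) _
    _ = C₀^Q * G^r * (G * ∑' k:ℕ, g k) := by
          rw [ENNReal.tsum_mul_right, ENNReal.tsum_geometric]
    _ = K * ∑' k:ℕ, g k := by rw [hK]; ring
  calc (∑' k:ℕ, ((2:ℝ≥0∞)^((k:ℝ)*β) * ENNReal.ofReal |b k|)^Q)^(1/Q)
      ≤ (K * ∑' k:ℕ, ((2:ℝ≥0∞)^((k:ℝ)*β) * ENNReal.ofReal |a k|)^Q)^(1/Q) :=
        ENNReal.rpow_le_rpow glob (by positivity)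
  _ = K^(1/Q) * (∑' k:ℕ, ((2:ℝ≥0∞)^((k:ℝ)*β) * ENNReal.ofReal |a k|)^Q)^(1/Q) :=
        ENNReal.mul_rpow_of_nonneg _ _ (by positivity)

lemma two_rpow_mul_neg (x : ℝ) : (2:ℝ≥0∞) ^ x * 2 ^ (-x) = 1 := by
  rw [← ENNReal.rpow_add _ _ (by norm_num) ENNReal.ofNat_ne_top,
    show x + -x = 0 by ring, ENNReal.rpow_zero]


lemma case_inf (μ : ℝ≥0∞) (β : ℝ) (C₀ : ℝ≥0∞)
    (hμ0 : 0 < μ) (hβ : 0 < β) (hC₀ : 0 < C₀) (hC₀' : C₀ < ∞) :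
    ∃ C : ℝ≥0∞, 0 < C ∧ C < ∞ ∧ ∀ a b : ℕ → ℝ,
      (∀ k : ℕ, ENNReal.ofReal |b k| ≤
        C₀ * lqNorm μ (fun j : {j : ℕ // k ≤ j} => ENNReal.ofReal |a j.1|)) →
      lqNorm ∞ (fun k : ℕ => (2 : ℝ≥0∞) ^ ((k : ℝ) * β) * ENNReal.ofReal |b k|) ≤
        C * lqNorm ∞ (fun k : ℕ => (2 : ℝ≥0∞) ^ ((k : ℝ) * β) * ENNReal.ofReal |a k|) := by
  by_cases hμ' : μ = ∞
  · subst hμ'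
    refine ⟨C₀, hC₀, hC₀', ?_⟩
    intro a b hab
    simp only [lqNorm, if_pos rfl] at hab ⊢
    refine iSup_le fun k => ?_
    calc (2:ℝ≥0∞)^((k:ℝ)*β) * ENNReal.ofReal |b k|
        ≤ (2:ℝ≥0∞)^((k:ℝ)*β) * (C₀ * ⨆ j : {j : ℕ // k ≤ j}, ENNReal.ofReal |a j.1|) :=
          mul_le_mul_right (hab k) _
    _ = C₀ * ⨆ j : {j : ℕ // k ≤ j}, (2:ℝ≥0∞)^((k:ℝ)*β) * ENNReal.ofReal |a j.1| := by
          rw [← mul_assoc, mul_comm ((2:ℝ≥0∞)^((k:ℝ)*β)) C₀, mul_assoc, ENNReal.mul_iSup]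
    _ ≤ C₀ * ⨆ k' : ℕ, (2:ℝ≥0∞)^((k':ℝ)*β) * ENNReal.ofReal |a k'| := by
          refine mul_le_mul_right (iSup_le fun j => le_iSup_of_le j.1 ?_) _
          refine mul_le_mul_left (ENNReal.rpow_le_rpow_of_exponent_le one_le_two ?_) _
          exact mul_le_mul_of_nonneg_right (Nat.cast_le.mpr j.2) hβ.le
  · set M := μ.toReal with hMdef
    have hM : 0 < M := ENNReal.toReal_pos hμ0.ne' hμ'
    set θ := (2:ℝ≥0∞) ^ (-(β*M)) with hθdef
    have hθ0 : θ ≠ 0 := two_rpow_ne_zero _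
    have hθ1 : θ < 1 :=
      ENNReal.rpow_lt_one_of_one_lt_of_neg one_lt_two (by nlinarith)
    set G := (1-θ)⁻¹ with hGdef
    have hG0 : G ≠ 0 := ENNReal.inv_ne_zero.mpr (ne_top_of_le_ne_top one_ne_top tsub_le_self)
    have hGt : G ≠ ∞ := (ENNReal.inv_lt_top.mpr (tsub_pos_iff_lt.mpr hθ1)).ne
    refine ⟨C₀ * G^(1/M),
      pos_iff_ne_zero.mpr (mul_ne_zero hC₀.ne'
        (ENNReal.rpow_pos (pos_iff_ne_zero.mpr hG0) hGt).ne'),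
      ENNReal.mul_lt_top hC₀' (ENNReal.rpow_lt_top_of_nonneg (by positivity) hGt), ?_⟩
    intro a b hab
    simp only [lqNorm, if_pos rfl, if_neg hμ'] at hab ⊢
    set S := ⨆ k' : ℕ, (2:ℝ≥0∞)^((k':ℝ)*β) * ENNReal.ofReal |a k'| with hS
    have hA : ∀ j : ℕ, ENNReal.ofReal |a j| ≤ (2:ℝ≥0∞)^(-((j:ℝ)*β)) * S := by
      intro j
      calc ENNReal.ofReal |a j|
          = (2:ℝ≥0∞)^(-((j:ℝ)*β)) * ((2:ℝ≥0∞)^((j:ℝ)*β) * ENNReal.ofReal |a j|) := by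
            rw [← mul_assoc, mul_comm ((2:ℝ≥0∞)^(-((j:ℝ)*β))) ((2:ℝ≥0∞)^((j:ℝ)*β)),
              two_rpow_mul_neg, one_mul]
      _ ≤ (2:ℝ≥0∞)^(-((j:ℝ)*β)) * S := by
            rw [hS]
            exact mul_le_mul_right (le_iSup (fun k' : ℕ => (2:ℝ≥0∞)^((k':ℝ)*β) * ENNReal.ofReal |a k'|) j) _
    refine iSup_le fun k => ?_
    have hterm2 : ∀ i:ℕ, ((2:ℝ≥0∞)^(-(((k+i:ℕ):ℝ)*β)) * S)^M
        = θ^i * ((2:ℝ≥0∞)^(-((k:ℝ)*β*M)) * S^M) := by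
      intro i
      rw [ENNReal.mul_rpow_of_nonneg _ _ hM.le, ← ENNReal.rpow_mul,
        ← ENNReal.rpow_natCast θ i, hθdef, ← ENNReal.rpow_mul, ← mul_assoc,
        ← ENNReal.rpow_add _ _ (by norm_num) ENNReal.ofNat_ne_top]
      congr 2
      push_cast
      ring
    have hsum : (∑' j : {j : ℕ // k ≤ j}, (ENNReal.ofReal |a j.1|)^M)
        ≤ G * ((2:ℝ≥0∞)^(-((k:ℝ)*β*M)) * S^M) := by
      calc (∑' j : {j : ℕ // k ≤ j}, (ENNReal.ofReal |a j.1|)^M)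
          ≤ ∑' j : {j : ℕ // k ≤ j}, ((2:ℝ≥0∞)^(-((j.1:ℝ)*β)) * S)^M :=
            ENNReal.tsum_le_tsum fun j => ENNReal.rpow_le_rpow (hA j.1) hM.le
      _ = ∑' i : ℕ, ((2:ℝ≥0∞)^(-(((k+i:ℕ):ℝ)*β)) * S)^M :=
            tsum_subtype_ge k (fun n => ((2:ℝ≥0∞)^(-((n:ℝ)*β)) * S)^M)
      _ = ∑' i : ℕ, θ^i * ((2:ℝ≥0∞)^(-((k:ℝ)*β*M)) * S^M) := tsum_congr hterm2
      _ = G * ((2:ℝ≥0∞)^(-((k:ℝ)*β*M)) * S^M) := by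
            rw [ENNReal.tsum_mul_right, ENNReal.tsum_geometric]
    calc (2:ℝ≥0∞)^((k:ℝ)*β) * ENNReal.ofReal |b k|
        ≤ (2:ℝ≥0∞)^((k:ℝ)*β) *
            (C₀ * (∑' j : {j : ℕ // k ≤ j}, (ENNReal.ofReal |a j.1|)^M)^(1/M)) :=
          mul_le_mul_right (hab k) _
    _ ≤ (2:ℝ≥0∞)^((k:ℝ)*β) * (C₀ * (G * ((2:ℝ≥0∞)^(-((k:ℝ)*β*M)) * S^M))^(1/M)) := by
          refine mul_le_mul_right (mul_le_mul_right (ENNReal.rpow_le_rpow hsum (by positivity)) _) _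
    _ = (2:ℝ≥0∞)^((k:ℝ)*β) * (C₀ * (G^(1/M) * ((2:ℝ≥0∞)^(-((k:ℝ)*β)) * S))) := by
          rw [ENNReal.mul_rpow_of_nonneg _ _ (by positivity : (0:ℝ) ≤ 1/M),
            ENNReal.mul_rpow_of_nonneg _ _ (by positivity : (0:ℝ) ≤ 1/M),
            ← ENNReal.rpow_mul, ← ENNReal.rpow_mul,
            show (-((k:ℝ)*β*M))*(1/M) = -((k:ℝ)*β) by field_simp,
            show M*(1/M) = 1 by field_simp, ENNReal.rpow_one]
    _ = (C₀ * G^(1/M)) * S * ((2:ℝ≥0∞)^((k:ℝ)*β) * 2^(-((k:ℝ)*β))) := by ring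
    _ = (C₀ * G^(1/M)) * S := by rw [two_rpow_mul_neg, mul_one]

/-- **Hardy's inequality for sequences, first case.** -/
theorem hardy_inequality_case1 (q μ : ℝ≥0∞) (β : ℝ) (C₀ : ℝ≥0∞)
    (hq : 0 < q) (hμ0 : 0 < μ) (hμq : μ ≤ q) (hβ : 0 < β) (hC₀ : 0 < C₀) (hC₀' : C₀ < ∞) :
    ∃ C : ℝ≥0∞, 0 < C ∧ C < ∞ ∧ ∀ a b : ℕ → ℝ,
      (∀ k : ℕ, ENNReal.ofReal |b k| ≤
        C₀ * lqNorm μ (fun j : {j : ℕ // k ≤ j} => ENNReal.ofReal |a j.1|)) →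
      lqNorm q (fun k : ℕ => (2 : ℝ≥0∞) ^ ((k : ℝ) * β) * ENNReal.ofReal |b k|) ≤
        C * lqNorm q (fun k : ℕ => (2 : ℝ≥0∞) ^ ((k : ℝ) * β) * ENNReal.ofReal |a k|) := by
  by_cases hq' : q = ∞
  · subst hq'
    exact case_inf μ β C₀ hμ0 hβ hC₀ hC₀'
  · exact case_fin q μ β C₀ hq hμ0 hμq hβ hC₀ hC₀' hq'

end
end

section
/- Hardy's inequality for sequences, second case: Let 0 < q ≤ ∞, 0 < μ ≤ q, β ≥ 0, λ > β and C₀ > 0. Suppose {a_k}_{k≥0} and {b_k}_{k≥0} are sequences of real numbers such that |b_k| ≤ C₀·2^{−kλ}·(Σ_{j=0}^k 2^{jμλ} |a_j|^μ)^{1/μ} for every k ≥ 0. Then there exists a constant C > 0, depending only on q, μ, β, λ, C₀ and not on the sequences, such that (Σ_{k=0}^∞ 2^{qkβ} |b_k|^q)^{1/q} ≤ C·(Σ_{k=0}^∞ 2^{qkβ} |a_k|^q)^{1/q} (with the usual supremum modification when q = ∞). -/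
open MeasureTheory ENNReal Filter
open scoped Classical

noncomputable section

private def tp (x : ℝ) : ℝ≥0∞ := (2 : ℝ≥0∞) ^ x

private lemma tp_def (x : ℝ) : tp x = (2 : ℝ≥0∞) ^ x := rfl

private lemma tp_ne_zero (x : ℝ) : tp x ≠ 0 := by
  simp [tp, ENNReal.rpow_eq_zero_iff]

private lemma tp_ne_top (x : ℝ) : tp x ≠ ∞ := by
  simp [tp, ENNReal.rpow_eq_top_iff]

private lemma tp_mul (x y : ℝ) : tp x * tp y = tp (x + y) := by
  rw [tp, tp, tp, ENNReal.rpow_add x y (by norm_num) (by norm_num)]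

private lemma tp_rpow (x y : ℝ) : tp x ^ y = tp (x * y) := by
  rw [tp, tp, ENNReal.rpow_mul]

private lemma tp_zero : tp 0 = 1 := by simp [tp]

private lemma tp_mono {x y : ℝ} (h : x ≤ y) : tp x ≤ tp y :=
  ENNReal.rpow_le_rpow_of_exponent_le one_le_two h

private lemma tp_lt_one {c : ℝ} (hc : 0 < c) : tp (-c) < 1 :=
  ENNReal.rpow_lt_one_of_one_lt_of_neg one_lt_two (neg_neg_of_pos hc)

private lemma K_ne_zero {c : ℝ} : (1 - tp (-c))⁻¹ ≠ 0 := by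
  rw [Ne, ENNReal.inv_eq_zero]
  exact fun h => (tsub_le_self.trans_lt (lt_top_iff_ne_top.mpr one_ne_top)).ne h

private lemma K_ne_top {c : ℝ} (hc : 0 < c) : (1 - tp (-c))⁻¹ ≠ ∞ := by
  rw [Ne, ENNReal.inv_eq_top, tsub_eq_zero_iff_le]
  exact not_le.mpr (tp_lt_one hc)

private lemma geom_tsum (c : ℝ) : ∑' i : ℕ, tp (-((i : ℝ) * c)) = (1 - tp (-c))⁻¹ := by
  rw [← ENNReal.tsum_geometric (tp (-c))]
  refine tsum_congr fun i => ?_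
  rw [← ENNReal.rpow_natCast (tp (-c)) i, tp_rpow]
  congr 1; ring

private lemma geom_sum_le {c : ℝ} (hc : 0 < c) (k : ℕ) :
    ∑ j ∈ Finset.range (k + 1), tp ((j : ℝ) * c) ≤ tp ((k : ℝ) * c) * (1 - tp (-c))⁻¹ := by
  have h1 : ∑ j ∈ Finset.range (k + 1), tp ((j : ℝ) * c)
      = ∑ j ∈ Finset.range (k + 1), tp ((k : ℝ) * c) * tp (-(((k - j : ℕ) : ℝ) * c)) := by
    refine Finset.sum_congr rfl fun j hj => ?_
    have hjk : j ≤ k := Nat.lt_succ_iff.mp (Finset.mem_range.mp hj)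
    rw [tp_mul]
    congr 1
    rw [Nat.cast_sub hjk]
    ring
  have h2 : ∑ j ∈ Finset.range (k + 1), tp ((k : ℝ) * c) * tp (-(((k - j : ℕ) : ℝ) * c))
      = ∑ j ∈ Finset.range (k + 1), tp ((k : ℝ) * c) * tp (-((j : ℝ) * c)) := by
    have := Finset.sum_range_reflect
      (fun j => tp ((k : ℝ) * c) * tp (-((j : ℝ) * c))) (k + 1)
    simpa using this
  rw [h1, h2, ← Finset.mul_sum]
  refine mul_le_mul' le_rfl ?_
  rw [← geom_tsum c]
  exact ENNReal.sum_le_tsum _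

private lemma rpow_ne_zero' {x : ℝ≥0∞} (h0 : x ≠ 0) (ht : x ≠ ∞) (y : ℝ) : x ^ y ≠ 0 := by
  simp [ENNReal.rpow_eq_zero_iff, h0, ht]

private lemma rpow_ne_top' {x : ℝ≥0∞} (h0 : x ≠ 0) (ht : x ≠ ∞) (y : ℝ) : x ^ y ≠ ∞ := by
  simp [ENNReal.rpow_eq_top_iff, h0, ht]

private lemma tp_mul_mul (x y : ℝ) (u : ℝ≥0∞) : tp x * (tp y * u) = tp (x + y) * u := by
  rw [← mul_assoc, tp_mul]

private lemma jensen_sum {s : ℝ} (hs : 1 ≤ s) (n : ℕ) (lam x : ℕ → ℝ≥0∞)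
    (hlam0 : ∀ j, lam j ≠ 0) (hlamt : ∀ j, lam j ≠ ∞) :
    (∑ j ∈ Finset.range n, lam j * x j) ^ s ≤
      (∑ j ∈ Finset.range n, lam j) ^ (s - 1) * ∑ j ∈ Finset.range n, lam j * x j ^ s := by
  have hs0 : (0 : ℝ) ≤ s := zero_le_one.trans hs
  rcases Nat.eq_zero_or_pos n with hn | hn
  · subst hn
    simp [ENNReal.zero_rpow_of_pos (lt_of_lt_of_le zero_lt_one hs)]
  set W : ℝ≥0∞ := ∑ j ∈ Finset.range n, lam j with hW
  have hW0 : W ≠ 0 := by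
    rw [hW, Ne, Finset.sum_eq_zero_iff]
    intro h
    exact hlam0 0 (h 0 (Finset.mem_range.mpr hn))
  have hWt : W ≠ ∞ := by
    rw [hW, Ne, ENNReal.sum_eq_top]
    push_neg
    exact fun j _ => hlamt j
  have hw' : ∑ j ∈ Finset.range n, lam j * W⁻¹ = 1 := by
    rw [← Finset.sum_mul, ← hW, ENNReal.mul_inv_cancel hW0 hWt]
  have key := ENNReal.rpow_arith_mean_le_arith_mean_rpow (Finset.range n)
    (fun j => lam j * W⁻¹) x hw' hs
  have e1 : ∑ j ∈ Finset.range n, (lam j * W⁻¹) * x j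
      = (∑ j ∈ Finset.range n, lam j * x j) * W⁻¹ := by
    rw [Finset.sum_mul]; exact Finset.sum_congr rfl fun j _ => by ring
  have e2 : ∑ j ∈ Finset.range n, (lam j * W⁻¹) * x j ^ s
      = (∑ j ∈ Finset.range n, lam j * x j ^ s) * W⁻¹ := by
    rw [Finset.sum_mul]; exact Finset.sum_congr rfl fun j _ => by ring
  rw [e1, e2, ENNReal.mul_rpow_of_nonneg _ _ hs0, ENNReal.inv_rpow] at key
  -- key : (∑ lam*x)^s * (W^s)⁻¹ ≤ (∑ lam*x^s) * W⁻¹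
  have hWs0 : W ^ s ≠ 0 := rpow_ne_zero' hW0 hWt s
  have hWst : W ^ s ≠ ∞ := rpow_ne_top' hW0 hWt s
  calc (∑ j ∈ Finset.range n, lam j * x j) ^ s
      = (∑ j ∈ Finset.range n, lam j * x j) ^ s * (W ^ s)⁻¹ * W ^ s := by
        rw [mul_assoc, ENNReal.inv_mul_cancel hWs0 hWst, mul_one]
    _ ≤ (∑ j ∈ Finset.range n, lam j * x j ^ s) * W⁻¹ * W ^ s :=
        mul_le_mul' key le_rfl
    _ = W ^ (s - 1) * ∑ j ∈ Finset.range n, lam j * x j ^ s := by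
        have : W ^ s = W * W ^ (s - 1) := by
          have h := ENNReal.rpow_add (1 : ℝ) (s - 1) hW0 hWt
          rw [show (1 : ℝ) + (s - 1) = s by ring, ENNReal.rpow_one] at h
          exact h
        rw [this, ← mul_assoc, mul_assoc _ W⁻¹ W, ENNReal.inv_mul_cancel hW0 hWt]
        ring

/-- **Hardy's inequality for sequences, second case.** -/
theorem hardy_inequality_case2 (q μ : ℝ≥0∞) (β lam : ℝ) (C₀ : ℝ≥0∞)
    (hq : 0 < q) (hμ0 : 0 < μ) (hμq : μ ≤ q) (hβ : 0 ≤ β) (hlam : β < lam)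
    (hC₀ : 0 < C₀) (hC₀' : C₀ < ∞) :
    ∃ C : ℝ≥0∞, 0 < C ∧ C < ∞ ∧ ∀ a b : ℕ → ℝ,
      (∀ k : ℕ, ENNReal.ofReal |b k| ≤
        C₀ * (2 : ℝ≥0∞) ^ (-(k : ℝ) * lam) *
          lqNorm μ (fun j : Fin (k + 1) =>
            (2 : ℝ≥0∞) ^ (((j : ℕ) : ℝ) * lam) * ENNReal.ofReal |a (j : ℕ)|)) →
      lqNorm q (fun k : ℕ => (2 : ℝ≥0∞) ^ ((k : ℝ) * β) * ENNReal.ofReal |b k|) ≤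
        C * lqNorm q (fun k : ℕ => (2 : ℝ≥0∞) ^ ((k : ℝ) * β) * ENNReal.ofReal |a k|) := by
  by_cases hqtop : q = ∞
  · by_cases hμtop : μ = ∞
    · -- q = ∞, μ = ∞
      refine ⟨C₀, hC₀, hC₀', fun a b hab => ?_⟩
      simp only [lqNorm, if_pos hqtop]
      simp only [← tp_def]
      refine iSup_le fun k => ?_
      have h1 := hab k
      simp only [lqNorm, if_pos hμtop, ← tp_def] at h1
      set S := ⨆ k' : ℕ, tp ((k' : ℝ) * β) * ENNReal.ofReal |a k'| with hS
      have hsup : (⨆ j : Fin (k + 1), tp (((j : ℕ) : ℝ) * lam) * ENNReal.ofReal |a (j : ℕ)|)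
          ≤ tp ((k : ℝ) * (lam - β)) * S := by
        refine iSup_le fun j => ?_
        have hj : ((j : ℕ) : ℝ) ≤ (k : ℝ) := by exact_mod_cast Nat.lt_succ_iff.mp j.isLt
        calc tp (((j : ℕ) : ℝ) * lam) * ENNReal.ofReal |a (j : ℕ)|
            = tp (((j : ℕ) : ℝ) * (lam - β)) * (tp (((j : ℕ) : ℝ) * β) * ENNReal.ofReal |a (j : ℕ)|) := by
              rw [← mul_assoc, tp_mul]
              congr 2
              ring
          _ ≤ tp ((k : ℝ) * (lam - β)) * S := by
              refine mul_le_mul' (tp_mono ?_) (le_iSup (fun k' : ℕ => tp ((k' : ℝ) * β) * ENNReal.ofReal |a k'|) (j : ℕ))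
              have := sub_pos.mpr hlam
              nlinarith
      calc tp ((k : ℝ) * β) * ENNReal.ofReal |b k|
          ≤ tp ((k : ℝ) * β) * (C₀ * tp (-(k : ℝ) * lam) * (tp ((k : ℝ) * (lam - β)) * S)) :=
            mul_le_mul' le_rfl (h1.trans (mul_le_mul' le_rfl hsup))
        _ = C₀ * S * (tp ((k : ℝ) * β) * tp (-(k : ℝ) * lam) * tp ((k : ℝ) * (lam - β))) := by ring
        _ = C₀ * S := by
            rw [tp_mul, tp_mul, show (k : ℝ) * β + -(k : ℝ) * lam + (k : ℝ) * (lam - β) = 0 by ring,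
              tp_zero, mul_one]
    · -- q = ∞, μ < ∞
      set M := μ.toReal with hMdef
      have hM0 : 0 < M := ENNReal.toReal_pos hμ0.ne' hμtop
      set δ := lam - β with hδdef
      have hδ0 : 0 < δ := sub_pos.mpr hlam
      have hδM : 0 < δ * M := mul_pos hδ0 hM0
      set K := (1 - tp (-(δ * M)))⁻¹ with hK
      refine ⟨C₀ * K ^ (1 / M), ?_, ?_, fun a b hab => ?_⟩
      · exact ENNReal.mul_pos hC₀.ne' (rpow_ne_zero' K_ne_zero (K_ne_top hδM) _)
      · exact ENNReal.mul_lt_top hC₀' (lt_top_iff_ne_top.mpr (rpow_ne_top' K_ne_zero (K_ne_top hδM) _))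
      simp only [lqNorm, if_pos hqtop]
      simp only [← tp_def]
      refine iSup_le fun k => ?_
      set S := ⨆ k' : ℕ, tp ((k' : ℝ) * β) * ENNReal.ofReal |a k'| with hS
      have h1 := hab k
      rw [lqNorm, if_neg hμtop, tsum_fintype,
        Fin.sum_univ_eq_sum_range
          (fun j => ((2 : ℝ≥0∞) ^ ((j : ℝ) * lam) * ENNReal.ofReal |a j|) ^ μ.toReal) (k + 1)] at h1
      simp only [← tp_def, ← hMdef] at h1
      have hsum : (∑ j ∈ Finset.range (k + 1), (tp ((j : ℝ) * lam) * ENNReal.ofReal |a j|) ^ M)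
          ≤ tp ((k : ℝ) * (δ * M)) * K * S ^ M := by
        calc ∑ j ∈ Finset.range (k + 1), (tp ((j : ℝ) * lam) * ENNReal.ofReal |a j|) ^ M
            ≤ ∑ j ∈ Finset.range (k + 1), tp ((j : ℝ) * (δ * M)) * S ^ M := by
              refine Finset.sum_le_sum fun j _ => ?_
              have hle : tp ((j : ℝ) * lam) * ENNReal.ofReal |a j| ≤ tp ((j : ℝ) * δ) * S := by
                rw [show (j : ℝ) * lam = (j : ℝ) * δ + (j : ℝ) * β by rw [hδdef]; ring, ← tp_mul,
                  mul_assoc]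
                exact mul_le_mul' le_rfl
                  (le_iSup (fun k' : ℕ => tp ((k' : ℝ) * β) * ENNReal.ofReal |a k'|) j)
              calc (tp ((j : ℝ) * lam) * ENNReal.ofReal |a j|) ^ M
                  ≤ (tp ((j : ℝ) * δ) * S) ^ M := ENNReal.rpow_le_rpow hle hM0.le
                _ = tp ((j : ℝ) * (δ * M)) * S ^ M := by
                    rw [ENNReal.mul_rpow_of_nonneg _ _ hM0.le, tp_rpow, mul_assoc]
          _ = (∑ j ∈ Finset.range (k + 1), tp ((j : ℝ) * (δ * M))) * S ^ M := by
              rw [← Finset.sum_mul]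
          _ ≤ tp ((k : ℝ) * (δ * M)) * K * S ^ M := mul_le_mul' (geom_sum_le hδM k) le_rfl
      have h2 : (∑ j ∈ Finset.range (k + 1), (tp ((j : ℝ) * lam) * ENNReal.ofReal |a j|) ^ M) ^ (1 / M)
          ≤ tp ((k : ℝ) * δ) * K ^ (1 / M) * S := by
        calc (∑ j ∈ Finset.range (k + 1), (tp ((j : ℝ) * lam) * ENNReal.ofReal |a j|) ^ M) ^ (1 / M)
            ≤ (tp ((k : ℝ) * (δ * M)) * K * S ^ M) ^ (1 / M) :=
              ENNReal.rpow_le_rpow hsum (one_div_pos.mpr hM0).le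
          _ = tp ((k : ℝ) * δ) * K ^ (1 / M) * S := by
              rw [ENNReal.mul_rpow_of_nonneg _ _ (one_div_pos.mpr hM0).le,
                ENNReal.mul_rpow_of_nonneg _ _ (one_div_pos.mpr hM0).le, tp_rpow,
                ← ENNReal.rpow_mul S, show M * (1 / M) = 1 by field_simp, ENNReal.rpow_one,
                show (k : ℝ) * (δ * M) * (1 / M) = (k : ℝ) * δ by field_simp]
      calc tp ((k : ℝ) * β) * ENNReal.ofReal |b k|
          ≤ tp ((k : ℝ) * β) * (C₀ * tp (-(k : ℝ) * lam) * (tp ((k : ℝ) * δ) * K ^ (1 / M) * S)) :=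
            mul_le_mul' le_rfl (h1.trans (mul_le_mul' le_rfl h2))
        _ = C₀ * K ^ (1 / M) * S * (tp ((k : ℝ) * β) * tp (-(k : ℝ) * lam) * tp ((k : ℝ) * δ)) := by
            ring
        _ = C₀ * K ^ (1 / M) * S := by
            rw [tp_mul, tp_mul, show (k : ℝ) * β + -(k : ℝ) * lam + (k : ℝ) * δ = 0 by
              rw [hδdef]; ring, tp_zero, mul_one]
  · -- q < ∞
    have hqt : q ≠ ∞ := hqtop
    have hμt : μ ≠ ∞ := ne_top_of_le_ne_top hqt hμq
    set Q := q.toReal with hQdef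
    set M := μ.toReal with hMdef
    have hQ0 : 0 < Q := ENNReal.toReal_pos hq.ne' hqt
    have hM0 : 0 < M := ENNReal.toReal_pos hμ0.ne' hμt
    have hMQ : M ≤ Q := ENNReal.toReal_mono hqt hμq
    set s := Q / M with hsdef
    have hs1 : 1 ≤ s := (one_le_div hM0).mpr hMQ
    have hs0 : (0 : ℝ) ≤ s - 1 := by linarith
    have hspos : (0 : ℝ) ≤ s := by linarith
    have hMs : M * s = Q := by rw [hsdef]; field_simp
    set δ := lam - β with hδdef
    have hδ0 : 0 < δ := sub_pos.mpr hlam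
    set ε := δ / 2 with hεdef
    have hεM : 0 < ε * M := by
      have : 0 < ε := by rw [hεdef]; positivity
      positivity
    set ρ := δ * (Q + M) / 2 with hρdef
    have hρ0 : 0 < ρ := by
      rw [hρdef]
      have : 0 < Q + M := by linarith
      positivity
    set K₁ := (1 - tp (-(ε * M)))⁻¹ with hK₁
    set K₂ := (1 - tp (-ρ))⁻¹ with hK₂
    set Cmid := C₀ ^ Q * K₁ ^ (s - 1) with hCmid
    set Ctot := Cmid * K₂ with hCtot
    have hC₀t : C₀ ≠ ∞ := hC₀'.ne
    have hCmid0 : Cmid ≠ 0 :=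
      mul_ne_zero (rpow_ne_zero' hC₀.ne' hC₀t Q) (rpow_ne_zero' K_ne_zero (K_ne_top hεM) _)
    have hCmidt : Cmid ≠ ∞ :=
      ENNReal.mul_ne_top (rpow_ne_top' hC₀.ne' hC₀t Q) (rpow_ne_top' K_ne_zero (K_ne_top hεM) _)
    have hCtot0 : Ctot ≠ 0 := mul_ne_zero hCmid0 K_ne_zero
    have hCtott : Ctot ≠ ∞ := ENNReal.mul_ne_top hCmidt (K_ne_top hρ0)
    refine ⟨Ctot ^ (1 / Q), ?_, ?_, fun a b hab => ?_⟩
    · exact pos_iff_ne_zero.mpr (rpow_ne_zero' hCtot0 hCtott _)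
    · exact lt_top_iff_ne_top.mpr (rpow_ne_top' hCtot0 hCtott _)
    simp only [lqNorm, if_neg hqt]
    simp only [← tp_def, ← hQdef]
    -- the key pointwise estimate
    have key : ∀ k : ℕ, (tp ((k : ℝ) * β) * ENNReal.ofReal |b k|) ^ Q ≤
        Cmid * ∑ j ∈ Finset.range (k + 1),
          tp (-(((k : ℝ) - (j : ℝ)) * ρ)) * (tp ((j : ℝ) * β) * ENNReal.ofReal |a j|) ^ Q := by
      intro k
      have h1 : ENNReal.ofReal |b k| ≤ C₀ * tp (-(k : ℝ) * lam) *
          (∑ j ∈ Finset.range (k + 1), (tp ((j : ℝ) * lam) * ENNReal.ofReal |a j|) ^ M) ^ (1 / M) := by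
        have h := hab k
        rw [lqNorm, if_neg hμt, tsum_fintype,
          Fin.sum_univ_eq_sum_range
            (fun j => ((2 : ℝ≥0∞) ^ ((j : ℝ) * lam) * ENNReal.ofReal |a j|) ^ μ.toReal) (k + 1)] at h
        simpa only [← tp_def, ← hMdef] using h
      set v : ℕ → ℝ≥0∞ := fun j => ENNReal.ofReal |a j| with hv
      have hTeq : ∑ j ∈ Finset.range (k + 1), (tp ((j : ℝ) * lam) * v j) ^ M
          = ∑ j ∈ Finset.range (k + 1),
              tp ((j : ℝ) * (ε * M)) * (tp (-((j : ℝ) * (ε * M))) * (tp ((j : ℝ) * lam) * v j) ^ M) := by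
        refine Finset.sum_congr rfl fun j _ => ?_
        rw [← mul_assoc, tp_mul, show (j : ℝ) * (ε * M) + -((j : ℝ) * (ε * M)) = 0 by ring,
          tp_zero, one_mul]
      have hjen := jensen_sum hs1 (k + 1) (fun j => tp ((j : ℝ) * (ε * M)))
        (fun j => tp (-((j : ℝ) * (ε * M))) * (tp ((j : ℝ) * lam) * v j) ^ M)
        (fun j => tp_ne_zero _) (fun j => tp_ne_top _)
      have h2 : (∑ j ∈ Finset.range (k + 1), (tp ((j : ℝ) * lam) * v j) ^ M) ^ s ≤
          (tp ((k : ℝ) * (ε * M)) * K₁) ^ (s - 1) * ∑ j ∈ Finset.range (k + 1),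
            tp ((j : ℝ) * (ε * M)) * (tp (-((j : ℝ) * (ε * M))) * (tp ((j : ℝ) * lam) * v j) ^ M) ^ s := by
        rw [hTeq]
        exact hjen.trans (mul_le_mul' (ENNReal.rpow_le_rpow (geom_sum_le hεM k) hs0) le_rfl)
      have hterm : ∀ j : ℕ,
          tp ((j : ℝ) * (ε * M)) * (tp (-((j : ℝ) * (ε * M))) * (tp ((j : ℝ) * lam) * v j) ^ M) ^ s
          = tp ((j : ℝ) * (ε * M) + (-((j : ℝ) * (ε * M)) + (j : ℝ) * lam * M) * s) * v j ^ Q := by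
        intro j
        rw [ENNReal.mul_rpow_of_nonneg (tp ((j : ℝ) * lam)) (v j) hM0.le, tp_rpow,
          ← mul_assoc (tp (-((j : ℝ) * (ε * M)))), tp_mul,
          ENNReal.mul_rpow_of_nonneg (tp (-((j : ℝ) * (ε * M)) + (j : ℝ) * lam * M)) (v j ^ M) hspos,
          tp_rpow, ← ENNReal.rpow_mul (v j) M s, hMs, ← mul_assoc, tp_mul]
      have hMQs : 1 / M * Q = s := by rw [hsdef]; field_simp
      calc (tp ((k : ℝ) * β) * ENNReal.ofReal |b k|) ^ Q
          ≤ (tp ((k : ℝ) * β) * (C₀ * tp (-(k : ℝ) * lam) *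
              (∑ j ∈ Finset.range (k + 1), (tp ((j : ℝ) * lam) * v j) ^ M) ^ (1 / M))) ^ Q :=
            ENNReal.rpow_le_rpow (mul_le_mul' le_rfl h1) hQ0.le
        _ = C₀ ^ Q * (tp (((k : ℝ) * β + -(k : ℝ) * lam) * Q) *
              (∑ j ∈ Finset.range (k + 1), (tp ((j : ℝ) * lam) * v j) ^ M) ^ s) := by
            rw [show tp ((k : ℝ) * β) * (C₀ * tp (-(k : ℝ) * lam) *
                  (∑ j ∈ Finset.range (k + 1), (tp ((j : ℝ) * lam) * v j) ^ M) ^ (1 / M))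
                = C₀ * (tp ((k : ℝ) * β) * tp (-(k : ℝ) * lam) *
                  (∑ j ∈ Finset.range (k + 1), (tp ((j : ℝ) * lam) * v j) ^ M) ^ (1 / M)) by ring,
              tp_mul, ENNReal.mul_rpow_of_nonneg C₀ _ hQ0.le,
              ENNReal.mul_rpow_of_nonneg (tp ((k : ℝ) * β + -(k : ℝ) * lam)) _ hQ0.le,
              tp_rpow, ← ENNReal.rpow_mul, hMQs]
        _ ≤ C₀ ^ Q * (tp (((k : ℝ) * β + -(k : ℝ) * lam) * Q) *
              ((tp ((k : ℝ) * (ε * M)) * K₁) ^ (s - 1) * ∑ j ∈ Finset.range (k + 1),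
                tp ((j : ℝ) * (ε * M)) *
                  (tp (-((j : ℝ) * (ε * M))) * (tp ((j : ℝ) * lam) * v j) ^ M) ^ s)) :=
            mul_le_mul' le_rfl (mul_le_mul' le_rfl h2)
        _ = Cmid * ∑ j ∈ Finset.range (k + 1),
              tp (-(((k : ℝ) - (j : ℝ)) * ρ)) * (tp ((j : ℝ) * β) * v j) ^ Q := by
            simp only [hterm]
            rw [ENNReal.mul_rpow_of_nonneg (tp ((k : ℝ) * (ε * M))) K₁ hs0, tp_rpow, hCmid]
            rw [show C₀ ^ Q * (tp (((k : ℝ) * β + -(k : ℝ) * lam) * Q) *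
                  (tp ((k : ℝ) * (ε * M) * (s - 1)) * K₁ ^ (s - 1) *
                    ∑ j ∈ Finset.range (k + 1),
                      tp ((j : ℝ) * (ε * M) + (-((j : ℝ) * (ε * M)) + (j : ℝ) * lam * M) * s) * v j ^ Q))
                = C₀ ^ Q * K₁ ^ (s - 1) *
                  ((tp (((k : ℝ) * β + -(k : ℝ) * lam) * Q) * tp ((k : ℝ) * (ε * M) * (s - 1))) *
                    ∑ j ∈ Finset.range (k + 1),
                      tp ((j : ℝ) * (ε * M) + (-((j : ℝ) * (ε * M)) + (j : ℝ) * lam * M) * s) * v j ^ Q) by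
                ring,
              tp_mul,
              Finset.mul_sum (Finset.range (k + 1))
                (fun j => tp ((j : ℝ) * (ε * M) + (-((j : ℝ) * (ε * M)) + (j : ℝ) * lam * M) * s) * v j ^ Q)
                (tp (((k : ℝ) * β + -(k : ℝ) * lam) * Q + (k : ℝ) * (ε * M) * (s - 1)))]
            rw [← mul_assoc]
            congr 1
            refine Finset.sum_congr rfl fun j hj => ?_
            rw [ENNReal.mul_rpow_of_nonneg (tp ((j : ℝ) * β)) (v j) hQ0.le, tp_rpow,
              tp_mul_mul, tp_mul_mul]
            congr 2
            rw [hρdef, hεdef, hδdef, ← hMs]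
            ring
    -- sum up
    have hsum : (∑' k : ℕ, (tp ((k : ℝ) * β) * ENNReal.ofReal |b k|) ^ Q) ≤
        Ctot * ∑' k : ℕ, (tp ((k : ℝ) * β) * ENNReal.ofReal |a k|) ^ Q := by
      have hinner : ∀ j : ℕ,
          (∑' k : ℕ, if j ≤ k then tp (-(((k : ℝ) - (j : ℝ)) * ρ)) else 0) = K₂ := by
        intro j
        have hinj : Function.Injective (fun i : ℕ => j + i) := fun x y h => by
          simp only [_root_.add_right_inj] at h; exact h
        have hsupp : Function.support
            (fun k : ℕ => if j ≤ k then tp (-(((k : ℝ) - (j : ℝ)) * ρ)) else 0)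
            ⊆ Set.range (fun i : ℕ => j + i) := by
          intro x hx
          rcases le_or_gt j x with h | h
          · exact ⟨x - j, by show j + (x - j) = x; omega⟩
          · simp only [Function.mem_support, if_neg (not_le.mpr h), ne_eq, not_true_eq_false] at hx
        rw [← Function.Injective.tsum_eq hinj hsupp, hK₂, ← geom_tsum ρ]
        refine tsum_congr fun i => ?_
        simp only [if_pos (Nat.le_add_right j i)]
        congr 1
        push_cast
        ring
      calc ∑' k : ℕ, (tp ((k : ℝ) * β) * ENNReal.ofReal |b k|) ^ Q
          ≤ ∑' k : ℕ, Cmid * ∑ j ∈ Finset.range (k + 1),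
              tp (-(((k : ℝ) - (j : ℝ)) * ρ)) * (tp ((j : ℝ) * β) * ENNReal.ofReal |a j|) ^ Q :=
            ENNReal.tsum_le_tsum key
        _ = Cmid * ∑' k : ℕ, ∑ j ∈ Finset.range (k + 1),
              tp (-(((k : ℝ) - (j : ℝ)) * ρ)) * (tp ((j : ℝ) * β) * ENNReal.ofReal |a j|) ^ Q :=
            ENNReal.tsum_mul_left
        _ = Cmid * ∑' k : ℕ, ∑' j : ℕ,
              (if j ≤ k then tp (-(((k : ℝ) - (j : ℝ)) * ρ)) else 0) *
                (tp ((j : ℝ) * β) * ENNReal.ofReal |a j|) ^ Q := by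
            congr 1
            refine tsum_congr fun k => ?_
            have hz : ∀ j ∉ Finset.range (k + 1),
                (if j ≤ k then tp (-(((k : ℝ) - (j : ℝ)) * ρ)) else 0) *
                  (tp ((j : ℝ) * β) * ENNReal.ofReal |a j|) ^ Q = 0 := fun j hj => by
              rw [if_neg fun h => hj (Finset.mem_range.mpr (Nat.lt_succ_of_le h)), zero_mul]
            rw [tsum_eq_sum hz]
            exact Finset.sum_congr rfl fun j hj =>
              by rw [if_pos (Nat.lt_succ_iff.mp (Finset.mem_range.mp hj))]
        _ = Cmid * ∑' j : ℕ, ∑' k : ℕ,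
              (if j ≤ k then tp (-(((k : ℝ) - (j : ℝ)) * ρ)) else 0) *
                (tp ((j : ℝ) * β) * ENNReal.ofReal |a j|) ^ Q := by
            rw [ENNReal.tsum_comm]
        _ = Cmid * ∑' j : ℕ, K₂ * (tp ((j : ℝ) * β) * ENNReal.ofReal |a j|) ^ Q := by
            congr 1
            refine tsum_congr fun j => ?_
            rw [ENNReal.tsum_mul_right, hinner j]
        _ = Ctot * ∑' j : ℕ, (tp ((j : ℝ) * β) * ENNReal.ofReal |a j|) ^ Q := by
            rw [ENNReal.tsum_mul_left, hCtot]
            ring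
    calc (∑' k : ℕ, (tp ((k : ℝ) * β) * ENNReal.ofReal |b k|) ^ Q) ^ (1 / Q)
        ≤ (Ctot * ∑' k : ℕ, (tp ((k : ℝ) * β) * ENNReal.ofReal |a k|) ^ Q) ^ (1 / Q) :=
          ENNReal.rpow_le_rpow hsum (one_div_pos.mpr hQ0).le
      _ = Ctot ^ (1 / Q) * (∑' k : ℕ, (tp ((k : ℝ) * β) * ENNReal.ofReal |a k|) ^ Q) ^ (1 / Q) :=
          ENNReal.mul_rpow_of_nonneg _ _ (one_div_pos.mpr hQ0).le

end
end

section
/- Let w be a weight on ℝ^N belonging to A^{loc}_∞(ℝ^N) and let a > 0. Then there exist constants C > 0 and δ > 0 such that for every axis-parallel cube Q ⊂ ℝ^N with side length r(Q) ≤ a and every measurable set F ⊂ Q one has w(F)/w(Q) ≤ C·(|F|/|Q|)^δ, where |E| denotes Lebesgue measure and w(E) := ∫_E w(x) dx. -/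
open MeasureTheory ENNReal Filter
open scoped Classical

noncomputable section

section AuxProofAloc
open Set Topology

variable {n : ℕ}

lemma cubeAt_eq_pi (c : Rn n) (s : ℝ) :
    cubeAt c s = Set.pi Set.univ (fun i => Set.Ioo (c i) (c i + s)) := by
  ext x; simp [cubeAt, Set.mem_pi]

lemma measurableSet_cubeAt (c : Rn n) (s : ℝ) : MeasurableSet (cubeAt c s) := by
  rw [cubeAt_eq_pi]; exact MeasurableSet.univ_pi fun i => measurableSet_Ioo

lemma volume_cubeAt (c : Rn n) (s : ℝ) :
    volume (cubeAt c s) = ENNReal.ofReal s ^ n := by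
  rw [cubeAt_eq_pi, volume_pi_pi]
  simp [Real.volume_Ioo]

/-- the `m`-th subcube of side `s/b` in the subdivision of `cubeAt c s`. -/
def subCube (c : Rn n) (s : ℝ) (b : ℕ) (m : Fin n → ℕ) : Set (Rn n) :=
  cubeAt (fun i => c i + s * m i / b) (s / b)

lemma subCube_nest (c : Rn n) {s : ℝ} (hs : 0 < s) {b b' : ℕ} (hb : 0 < b) (hb' : 0 < b')
    (m : Fin n → ℕ) : subCube c s (b * b') m ⊆ subCube c s b (fun i => m i / b') := by
  intro x hx i
  have h1 := (hx i).1
  have h2 := (hx i).2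
  have hb0 : (0:ℝ) < b := by exact_mod_cast hb
  have hb'0 : (0:ℝ) < b' := by exact_mod_cast hb'
  have hbb : ((b * b' : ℕ) : ℝ) = (b:ℝ) * b' := by push_cast; ring
  have key1 : ((m i / b' : ℕ):ℝ) * b' ≤ (m i : ℝ) := by
    exact_mod_cast Nat.div_mul_le_self (m i) b'
  have key2 : (m i : ℝ) + 1 ≤ (((m i / b' : ℕ):ℝ) + 1) * b' := by
    have : m i + 1 ≤ (m i / b' + 1) * b' := by
      have h := Nat.div_add_mod (m i) b'
      have h2 := Nat.mod_lt (m i) hb'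
      nlinarith [h, h2]
    exact_mod_cast this
  rw [hbb] at h1 h2
  constructor
  · have : s * ((m i / b' : ℕ):ℝ) / b ≤ s * m i / ((b:ℝ) * b') := by
      rw [div_le_div_iff₀ hb0 (by positivity)]
      nlinarith [mul_le_mul_of_nonneg_left key1 (by positivity : (0:ℝ) ≤ s)]
    dsimp only; linarith
  · have : s * (m i) / ((b:ℝ)*b') + s / ((b:ℝ)*b') ≤ s * ((m i / b' : ℕ):ℝ) / b + s / b := by
      rw [← add_div, ← add_div, div_le_div_iff₀ (by positivity) hb0]
      nlinarith [mul_le_mul_of_nonneg_left key2 (by positivity : (0:ℝ) ≤ s)]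
    dsimp only; linarith

lemma subCube_one (c : Rn n) (s : ℝ) (m : Fin n → ℕ) (hm : ∀ i, m i = 0) :
    subCube c s 1 m = cubeAt c s := by
  ext x; simp [subCube, cubeAt, hm]

lemma subCube_subset (c : Rn n) {s : ℝ} (hs : 0 < s) {b : ℕ} (hb : 0 < b)
    {m : Fin n → ℕ} (hm : ∀ i, m i < b) : subCube c s b m ⊆ cubeAt c s := by
  have h := subCube_nest c hs (Nat.one_pos) hb m
  rw [one_mul] at h
  refine h.trans ?_
  rw [subCube_one c s _ (fun i => Nat.div_eq_of_lt (hm i))]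

lemma volume_subCube (c : Rn n) (s : ℝ) (b : ℕ) (m : Fin n → ℕ) :
    volume (subCube c s b m) = ENNReal.ofReal (s / b) ^ n := volume_cubeAt _ _

lemma subCube_disjoint (c : Rn n) {s : ℝ} (hs : 0 < s) {b : ℕ}
    {m m' : Fin n → ℕ} (h : m ≠ m') : Disjoint (subCube c s b m) (subCube c s b m') := by
  rw [Set.disjoint_left]
  intro x hx hx'
  obtain ⟨i, hi⟩ : ∃ i, m i ≠ m' i := by
    by_contra h'; push_neg at h'; exact h (funext h')
  have key : ∀ (u v : ℕ), u < v → ∀ y : ℝ,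
      y < c i + s * u / b + s / b → c i + s * v / b < y → False := by
    intro u v huv y h1 h2
    have hv : (u : ℝ) + 1 ≤ v := by exact_mod_cast huv
    have hb0 : (0:ℝ) ≤ b := Nat.cast_nonneg b
    rcases eq_or_lt_of_le hb0 with hb | hb
    · rw [← hb] at h1 h2; simp at h1 h2; linarith
    · have : s * u / b + s / b ≤ s * v / b := by
        rw [← add_div, div_le_div_iff₀ hb hb]
        nlinarith [mul_le_mul_of_nonneg_left hv (by positivity : (0:ℝ) ≤ s * b)]
      linarith
  rcases Nat.lt_or_ge (m i) (m' i) with hlt | hge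
  · exact key _ _ hlt (x i) (hx i).2 (hx' i).1
  · exact key _ _ (lt_of_le_of_ne hge (Ne.symm hi)) (x i) (hx' i).2 (hx i).1

lemma volume_hyperplane (i : Fin n) (v : ℝ) : volume {x : Rn n | x i = v} = 0 := by
  have he : {x : Rn n | x i = v} =
      Set.pi Set.univ (fun j => if j = i then ({v} : Set ℝ) else Set.univ) := by
    ext x
    simp only [Set.mem_setOf_eq, Set.mem_pi, Set.mem_univ, forall_true_left]
    constructor
    · intro h j; by_cases hj : j = i <;> simp [hj, h]
    · intro h; have := h i; simpa using this
  rw [he, volume_pi_pi]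
  exact Finset.prod_eq_zero (Finset.mem_univ i) (by simp)

/-- points of the cube off the subdivision grid belong to some subcube. -/
lemma mem_subCube_of (c : Rn n) {s : ℝ} (hs : 0 < s) {b : ℕ} (hb : 0 < b) {x : Rn n}
    (hx : x ∈ cubeAt c s) (hg : ∀ (i : Fin n) (g : ℕ), x i ≠ c i + s * g / b) :
    ∃ m : Fin n → ℕ, (∀ i, m i < b) ∧ x ∈ subCube c s b m := by
  have hb0 : (0:ℝ) < b := by exact_mod_cast hb
  set y : Fin n → ℝ := fun i => (x i - c i) * b / s with hy
  have main : ∀ i, (⌊y i⌋.toNat : ℝ) < b ∧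
      (c i + s * (⌊y i⌋.toNat : ℝ) / b < x i ∧ x i < c i + s * (⌊y i⌋.toNat : ℝ) / b + s / b) := by
    intro i
    have h1 : (0:ℝ) < x i - c i := by have := (hx i).1; linarith
    have h2 : x i - c i < s := by have := (hx i).2; linarith
    have h5 : (0:ℝ) < y i := by rw [hy]; dsimp only; positivity
    have hfl : ((⌊y i⌋.toNat : ℕ) : ℝ) = ((⌊y i⌋ : ℤ) : ℝ) := by
      exact_mod_cast Int.toNat_of_nonneg (Int.le_floor.2 (by exact_mod_cast h5.le))
    have h3 : ((⌊y i⌋ : ℤ) : ℝ) ≤ y i := Int.floor_le _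
    have h4 : y i < ((⌊y i⌋ : ℤ) : ℝ) + 1 := Int.lt_floor_add_one _
    have hyb : y i < b := by
      rw [hy]; dsimp only
      rw [div_lt_iff₀ hs]
      nlinarith
    have hx_eq : x i = c i + s * y i / b := by
      rw [hy]; dsimp only; field_simp; ring
    refine ⟨by rw [hfl]; linarith, ?_, ?_⟩
    · have hle : c i + s * (⌊y i⌋.toNat : ℝ) / b ≤ x i := by
        rw [hx_eq, hfl]
        have : s * ((⌊y i⌋:ℤ) : ℝ) / b ≤ s * y i / b := by
          gcongr
        linarith
      rcases eq_or_lt_of_le hle with he | hlt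
      · exact absurd he.symm (hg i ⌊y i⌋.toNat)
      · exact hlt
    · rw [hx_eq, hfl]
      have : s * y i / b < s * ((⌊y i⌋:ℤ):ℝ) / b + s / b := by
        rw [← add_div, div_lt_div_iff₀ hb0 hb0]
        nlinarith [mul_lt_mul_of_pos_right (mul_lt_mul_of_pos_left h4 hs) hb0]
      linarith
  refine ⟨fun i => ⌊y i⌋.toNat, fun i => by exact_mod_cast (main i).1, fun i => (main i).2⟩

def gridSet (c : Rn n) (s : ℝ) (b : ℕ) : Set (Rn n) :=
  ⋃ (i : Fin n), ⋃ (g : ℕ), {x : Rn n | x i = c i + s * g / b}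

lemma volume_gridSet (c : Rn n) (s : ℝ) (b : ℕ) : volume (gridSet c s b) = 0 :=
  measure_iUnion_null fun i => measure_iUnion_null fun g => volume_hyperplane i _

lemma cover_subCube (c : Rn n) {s : ℝ} (hs : 0 < s) {b : ℕ} (hb : 0 < b) :
    cubeAt c s ⊆ (⋃ m ∈ {m : Fin n → ℕ | ∀ i, m i < b}, subCube c s b m) ∪ gridSet c s b := by
  intro x hx
  by_cases hg : ∀ (i : Fin n) (g : ℕ), x i ≠ c i + s * g / b
  · obtain ⟨m, hm1, hm2⟩ := mem_subCube_of c hs hb hx hg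
    exact Or.inl (Set.mem_biUnion hm1 hm2)
  · push_neg at hg; obtain ⟨i, g, h⟩ := hg
    exact Or.inr (Set.mem_iUnion.2 ⟨i, Set.mem_iUnion.2 ⟨g, h⟩⟩)

def nuW {n : ℕ} (w : Rn n → ℝ) : Measure (Rn n) :=
  volume.withDensity fun x => ENNReal.ofReal (w x)

lemma nuW_apply {w : Rn n → ℝ} (hw : Measurable w) {E : Set (Rn n)} (hE : MeasurableSet E) :
    nuW w E = ∫⁻ x in E, ENNReal.ofReal (w x) := withDensity_apply _ hE

lemma nuW_pos {w : Rn n → ℝ} (hw : Measurable w) (hpos : ∀ x, 0 < w x)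
    {E : Set (Rn n)} (hE : MeasurableSet E) (hEv : 0 < volume E) : 0 < nuW w E := by
  rw [nuW_apply hw hE]
  rw [MeasureTheory.lintegral_pos_iff_support hw.ennreal_ofReal]
  have : Function.support (fun x => ENNReal.ofReal (w x)) = Set.univ := by
    ext x; simp only [Function.mem_support, Set.mem_univ, iff_true]
    exact (ENNReal.ofReal_pos.2 (hpos x)).ne'
  rw [this, Measure.restrict_apply_univ]
  exact hEv

lemma nuW_cube_pos {w : Rn n → ℝ} (hw : Measurable w) (hpos : ∀ x, 0 < w x)
    (c : Rn n) {s : ℝ} (hs : 0 < s) : 0 < nuW w (cubeAt c s) :=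
  nuW_pos hw hpos (measurableSet_cubeAt c s) (by
    rw [volume_cubeAt]; exact ENNReal.pow_pos (ENNReal.ofReal_pos.2 hs) n)

lemma volume_cubeAt_ne_top (c : Rn n) (s : ℝ) : volume (cubeAt c s) ≠ ∞ := by
  rw [volume_cubeAt]; exact (pow_ne_top ENNReal.ofReal_ne_top)

/-- Base step: sets occupying at most a `(1-α)` fraction of a cube have `ν`-measure at most
`(1 - M⁻¹)` of the cube. -/
lemma base_step {w : Rn n → ℝ} (hw : Measurable w) {α : ℝ} (hα0 : 0 < α) (hα1 : α < 1)
    {M : ℝ≥0∞} (hM0 : M ≠ 0) (hMt : M ≠ ∞)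
    (hyp : ∀ (c : Rn n) (s : ℝ), 0 < s → s ≤ 1 →
      ∀ F : Set (Rn n), F ⊆ cubeAt c s → MeasurableSet F →
        ENNReal.ofReal α * volume (cubeAt c s) ≤ volume F →
        (∫⁻ x in cubeAt c s, ENNReal.ofReal (w x)) ≤ M * ∫⁻ x in F, ENNReal.ofReal (w x))
    (c : Rn n) {s : ℝ} (hs : 0 < s) (hs1 : s ≤ 1)
    {E : Set (Rn n)} (hE : E ⊆ cubeAt c s) (hEm : MeasurableSet E)
    (hfin : nuW w (cubeAt c s) ≠ ∞)
    (hsize : volume E ≤ ENNReal.ofReal (1 - α) * volume (cubeAt c s)) :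
    nuW w E ≤ (1 - M⁻¹) * nuW w (cubeAt c s) := by
  set Q := cubeAt c s with hQ
  have hQm : MeasurableSet Q := measurableSet_cubeAt c s
  have hVt : volume Q ≠ ∞ := volume_cubeAt_ne_top c s
  have hEvt : volume E ≠ ∞ := (lt_of_le_of_lt (measure_mono hE) hVt.lt_top).ne
  set F : Set (Rn n) := Q \ E with hF
  have hFm : MeasurableSet F := hQm.diff hEm
  have hFQ : F ⊆ Q := Set.diff_subset
  -- volume lower bound for F
  have hvolF : ENNReal.ofReal α * volume Q ≤ volume F := by
    have hFv : volume F = volume Q - volume E := measure_diff hE hEm.nullMeasurableSet hEvt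
    rw [hFv]
    refine ENNReal.le_sub_of_add_le_right hEvt ?_
    calc ENNReal.ofReal α * volume Q + volume E
        ≤ ENNReal.ofReal α * volume Q + ENNReal.ofReal (1 - α) * volume Q := by gcongr
      _ = (ENNReal.ofReal α + ENNReal.ofReal (1 - α)) * volume Q := by ring
      _ = volume Q := by
          rw [← ENNReal.ofReal_add hα0.le (by linarith)]
          norm_num
  have hWQF : nuW w Q ≤ M * nuW w F := by
    rw [nuW_apply hw hQm, nuW_apply hw hFm]
    exact hyp c s hs hs1 F hFQ hFm hvolF
  have hFfin : nuW w F ≠ ∞ := (lt_of_le_of_lt (measure_mono hFQ) hfin.lt_top).ne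
  have hinv : M⁻¹ * nuW w Q ≤ nuW w F := by
    calc M⁻¹ * nuW w Q ≤ M⁻¹ * (M * nuW w F) := by gcongr
      _ = nuW w F := by rw [← mul_assoc, ENNReal.inv_mul_cancel hM0 hMt, one_mul]
  have hQF : Q \ F = E := Set.diff_diff_cancel_left hE
  calc nuW w E = nuW w Q - nuW w F := by
        rw [← hQF, measure_diff hFQ hFm.nullMeasurableSet hFfin]
    _ ≤ nuW w Q - M⁻¹ * nuW w Q := tsub_le_tsub_left hinv _
    _ = (1 - M⁻¹) * nuW w Q := by rw [ENNReal.sub_mul (fun _ _ => hfin), one_mul]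

set_option maxHeartbeats 2000000 in
lemma main_induction {w : Rn n → ℝ} (hw : Measurable w) {α : ℝ} (hα0 : 0 < α) (hα1 : α < 1)
    {M : ℝ≥0∞} (hM0 : M ≠ 0) (hMt : M ≠ ∞)
    (hyp : ∀ (c : Rn n) (s : ℝ), 0 < s → s ≤ 1 →
      ∀ F : Set (Rn n), F ⊆ cubeAt c s → MeasurableSet F →
        ENNReal.ofReal α * volume (cubeAt c s) ≤ volume F →
        (∫⁻ x in cubeAt c s, ENNReal.ofReal (w x)) ≤ M * ∫⁻ x in F, ENNReal.ofReal (w x)) :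
    ∀ k : ℕ, ∀ (c : Rn n) (s : ℝ), 0 < s → s ≤ 1 →
      ∀ E : Set (Rn n), E ⊆ cubeAt c s → MeasurableSet E →
      nuW w (cubeAt c s) ≠ ∞ →
      volume E ≤ ENNReal.ofReal ((1-α) * ((1-α)/2^n)^k) * volume (cubeAt c s) →
      nuW w E ≤ (1 - M⁻¹)^(k+1) * nuW w (cubeAt c s) := by
  intro k
  induction k with
  | zero =>
    intro c s hs hs1 E hE hEm hfin hsize
    simpa using base_step hw hα0 hα1 hM0 hMt hyp c hs hs1 hE hEm hfin (by simpa using hsize)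
  | succ k IH =>
    intro c s hs hs1 E hE hEm hfin hsize
    set β : ℝ := 1 - α with hβ
    have hβ0 : 0 < β := by simp only [hβ]; linarith
    have hβ1 : β < 1 := by simp only [hβ]; linarith
    set lam : ℝ := β / 2^n with hlam
    have h2n : (0:ℝ) < 2^n := by positivity
    have h2n1 : (1:ℝ) ≤ 2^n := one_le_pow₀ (by norm_num)
    have hlam0 : 0 < lam := by positivity
    have hlam1 : lam < 1 := by rw [hlam, div_lt_one h2n]; linarith
    set t : ℝ := lam ^ (k+1) with ht
    have ht0 : 0 < t := pow_pos hlam0 _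
    have ht1 : t < 1 := pow_lt_one₀ hlam0.le hlam1 (Nat.succ_ne_zero k)
    set Q := cubeAt c s with hQdef
    have hQm : MeasurableSet Q := measurableSet_cubeAt c s
    set D : ℕ × (Fin n → ℕ) → Set (Rn n) := fun p => subCube c s (2^p.1) p.2 with hD
    have hDm : ∀ p, MeasurableSet (D p) := fun p => measurableSet_cubeAt _ _
    set Bad : ℕ × (Fin n → ℕ) → Prop := fun p =>
      1 ≤ p.1 ∧ (∀ i, p.2 i < 2^p.1) ∧ ENNReal.ofReal t * volume (D p) < volume (E ∩ D p)
      with hBad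
    set anc : ℕ × (Fin n → ℕ) → ℕ → ℕ × (Fin n → ℕ) :=
      fun p j => (j, fun i => p.2 i / 2^(p.1 - j)) with hanc
    have hanc_sub : ∀ p j, j ≤ p.1 → D p ⊆ D (anc p j) := by
      intro p j hj
      have h2 : (2:ℕ)^p.1 = 2^j * 2^(p.1-j) := by rw [← pow_add]; congr 1; omega
      simp only [hD, hanc, h2]
      exact subCube_nest c hs (pow_pos (by norm_num) j)
        (pow_pos (by norm_num) _) p.2
    have hanc_box : ∀ p, (∀ i, p.2 i < 2^p.1) → ∀ j, j ≤ p.1 → ∀ i, (anc p j).2 i < 2^j := by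
      intro p hp j hj i
      simp only [hanc]
      rw [Nat.div_lt_iff_lt_mul (pow_pos (by norm_num) _), ← pow_add]
      have : j + (p.1 - j) = p.1 := by omega
      rw [this]; exact hp i
    have hDQ : ∀ p, (∀ i, p.2 i < 2^p.1) → D p ⊆ Q := by
      intro p hp
      exact subCube_subset c hs (pow_pos (by norm_num) _) hp
    set MaxBad : ℕ × (Fin n → ℕ) → Prop :=
      fun p => Bad p ∧ ∀ j, 1 ≤ j → j < p.1 → ¬ Bad (anc p j) with hMax
    have claimA : ∀ J p, p.1 ≤ J → Bad p → ∃ q, MaxBad q ∧ D p ⊆ D q := by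
      intro J
      induction J with
      | zero => intro p hp hbad; exact absurd (hbad.1.trans hp) (by norm_num)
      | succ J IHJ =>
        intro p hp hbad
        by_cases hmax : ∀ j, 1 ≤ j → j < p.1 → ¬ Bad (anc p j)
        · exact ⟨p, ⟨hbad, hmax⟩, subset_rfl⟩
        · push_neg at hmax
          obtain ⟨j, hj1, hjp, hbadj⟩ := hmax
          obtain ⟨q, hq, hsub⟩ := IHJ (anc p j) (by simp only [hanc]; omega) hbadj
          exact ⟨q, hq, (hanc_sub p j hjp.le).trans hsub⟩
    have claimB : ∀ p q, MaxBad p → MaxBad q → p ≠ q → Disjoint (D p) (D q) := by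
      have key : ∀ p q, MaxBad p → MaxBad q → p ≠ q → p.1 ≤ q.1 → Disjoint (D p) (D q) := by
        intro p q hp hq hne hle
        rcases eq_or_lt_of_le hle with heq | hlt
        · have hm : p.2 ≠ q.2 := by
            intro h; exact hne (Prod.ext heq h)
          have : D q = subCube c s (2^p.1) q.2 := by rw [hD]; simp only; rw [heq]
          rw [this, hD]
          exact subCube_disjoint c hs hm
        · by_cases hsame : (anc q p.1).2 = p.2
          · exfalso
            have heq : anc q p.1 = p := Prod.ext rfl hsame
            exact hq.2 p.1 hp.1.1 hlt (heq ▸ hp.1)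
          · have hdis : Disjoint (D (anc q p.1)) (D p) := subCube_disjoint c hs hsame
            exact ((hdis.mono_left (hanc_sub q p.1 hlt.le)).symm : Disjoint (D p) (D q))
      intro p q hp hq hne
      rcases le_total p.1 q.1 with h | h
      · exact key p q hp hq hne h
      · exact (key q p hq hp (Ne.symm hne) h).symm
    set U := ⋃ (q : {p // MaxBad p}), D q.1 with hU
    have hUm : MeasurableSet U := MeasurableSet.iUnion fun q => hDm _
    have hdisj : Pairwise (Function.onFun Disjoint (fun q : {p // MaxBad p} => D q.1)) := by
      intro q1 q2 hne
      exact claimB q1.1 q2.1 q1.2 q2.2 (fun h => hne (Subtype.ext h))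
    have hAm : MeasurableSet (E \ U) := hEm.diff hUm
    have claimC : volume (E \ U) = 0 := by
      set A := E \ U with hA
      by_contra hA0
      have hgrid : volume (⋃ j : ℕ, gridSet c s (2^j)) = 0 :=
        measure_iUnion_null fun j => volume_gridSet _ _ _
      have hdens := Besicovitch.ae_tendsto_measure_inter_div (volume : Measure (Rn n)) A
      have hae2 : ∀ᵐ x ∂(volume.restrict A), x ∉ ⋃ j : ℕ, gridSet c s (2^j) := by
        refine ae_restrict_of_ae (ae_iff.2 ?_)
        have hset : {x : Rn n | ¬ x ∉ (⋃ j : ℕ, gridSet c s (2^j))}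
            = ⋃ j : ℕ, gridSet c s (2^j) := by ext z; simp
        rw [hset]; exact hgrid
      have hae3 : ∀ᵐ x ∂(volume.restrict A), x ∈ A := ae_restrict_mem hAm
      have hfalse : ∀ᵐ x ∂(volume.restrict A), False := by
        filter_upwards [hdens, hae2, hae3] with x hx1 hx2 hxA
        -- x is a density point of A, off the grids, and in A
        have hxQ : x ∈ Q := hE hxA.1
        set ρ : ℝ := 1 - (1-t)/2^(n+1) with hρ
        have hρ0 : 0 < ρ := by
          have h1 : (1-t)/2^(n+1) < 1 := by
            rw [div_lt_one (by positivity)]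
            have : (1:ℝ) ≤ 2^(n+1) := one_le_pow₀ (by norm_num)
            linarith
          simp only [hρ]; linarith
        have hρ1 : ENNReal.ofReal ρ < 1 := by
          rw [← ENNReal.ofReal_one]
          apply ENNReal.ofReal_lt_ofReal_iff_of_nonneg hρ0.le |>.2
          have : 0 < (1-t)/2^(n+1) := div_pos (by linarith) (by positivity)
          simp only [hρ]; linarith
        have hev : ∀ᶠ r in 𝓝[>] (0:ℝ),
            ENNReal.ofReal ρ < volume (A ∩ Metric.closedBall x r) / volume (Metric.closedBall x r) :=
          (tendsto_order.1 hx1).1 _ hρ1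
        have hseq : Tendsto (fun j : ℕ => s / 2^j) atTop (𝓝[>] (0:ℝ)) := by
          rw [tendsto_nhdsWithin_iff]
          constructor
          · have h := (tendsto_pow_atTop_nhds_zero_of_lt_one (by norm_num : (0:ℝ) ≤ 1/2)
              (by norm_num : (1/2:ℝ) < 1)).const_mul s
            simp only [mul_zero] at h
            convert h using 2 with j
            rw [div_pow, one_pow, mul_one_div]
          · exact Filter.Eventually.of_forall fun j => Set.mem_Ioi.2 (by positivity)
        obtain ⟨j, hratio, hj1⟩ := ((hseq.eventually hev).and (eventually_ge_atTop 1)).exists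
        set r : ℝ := s / 2^j with hr
        have hr0 : 0 < r := by positivity
        -- the grid condition at level 2^j
        have hg : ∀ (i : Fin n) (g : ℕ), x i ≠ c i + s * g / ((2^j : ℕ) : ℝ) := by
          intro i g hgi
          apply hx2
          refine Set.mem_iUnion.2 ⟨j, Set.mem_iUnion.2 ⟨i, Set.mem_iUnion.2 ⟨g, ?_⟩⟩⟩
          exact hgi
        obtain ⟨m, hmbox, hxD⟩ :=
          mem_subCube_of c hs (pow_pos (by norm_num) j) hxQ hg
        set Dj := subCube c s (2^j) m with hDj
        have hcast : ((2^j : ℕ) : ℝ) = 2^j := by push_cast; ring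
        have hDsub : Dj ⊆ Metric.closedBall x r := by
          intro y hy
          rw [Metric.mem_closedBall, dist_pi_le_iff hr0.le]
          intro i
          have h1 := (hy i).1; have h2 := (hy i).2
          have h3 := (hxD i).1; have h4 := (hxD i).2
          rw [hcast] at h1 h2 h3 h4
          rw [Real.dist_eq, abs_le]
          constructor
          · linarith
          · linarith
        have hvolDj : volume Dj = ENNReal.ofReal (r ^ n) := by
          rw [hDj, volume_subCube, ← ENNReal.ofReal_pow (by positivity)]
          rw [hcast]
        have hvolB : volume (Metric.closedBall x r) = ENNReal.ofReal ((2*r) ^ n) := by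
          rw [closedBall_pi x hr0.le]
          rw [volume_pi_pi]
          have hcb : ∀ i : Fin n, volume (Metric.closedBall (x i) r) = ENNReal.ofReal (2*r) := by
            intro i; rw [Real.closedBall_eq_Icc, Real.volume_Icc]; congr 1; ring
          simp only [hcb]
          rw [Finset.prod_const, ← ENNReal.ofReal_pow (by positivity)]
          simp [Finset.card_univ]
        have hBne : volume (Metric.closedBall x r) ≠ 0 := by
          rw [hvolB]
          simp only [ne_eq, ENNReal.ofReal_eq_zero, not_le]
          positivity
        have hBnt : volume (Metric.closedBall x r) ≠ ∞ := by
          rw [hvolB]; exact ofReal_ne_top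
        have hABlt : ENNReal.ofReal ρ * volume (Metric.closedBall x r)
            < volume (A ∩ Metric.closedBall x r) := by
          rw [ENNReal.lt_div_iff_mul_lt (Or.inl hBne) (Or.inl hBnt)] at hratio
          exact hratio
        have hsplit : volume (A ∩ Metric.closedBall x r)
            ≤ volume (A ∩ Dj) + (volume (Metric.closedBall x r) - volume Dj) := by
          have hsub2 : A ∩ Metric.closedBall x r ⊆ (A ∩ Dj) ∪ (Metric.closedBall x r \ Dj) := by
            intro y hy
            by_cases hyD : y ∈ Dj
            · exact Or.inl ⟨hy.1, hyD⟩
            · exact Or.inr ⟨hy.2, hyD⟩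
          refine (measure_mono hsub2).trans ?_
          refine (measure_union_le _ _).trans ?_
          gcongr
          exact le_of_eq (measure_diff hDsub (measurableSet_cubeAt _ _).nullMeasurableSet
            (by rw [hvolDj]; exact ofReal_ne_top))
        have hfinAD : volume (A ∩ Dj) ≠ ∞ :=
          ((measure_mono Set.inter_subset_right).trans_lt
            (by rw [hvolDj]; exact ofReal_lt_top)).ne
        set v : ℝ := (volume (A ∩ Dj)).toReal with hv
        have hv0 : 0 ≤ v := ENNReal.toReal_nonneg
        have hvol_eq : volume (A ∩ Dj) = ENNReal.ofReal v := (ENNReal.ofReal_toReal hfinAD).symm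
        have h2rge : r^n ≤ (2*r)^n := by
          apply pow_le_pow_left₀ hr0.le
          linarith
        have hranges : ENNReal.ofReal (ρ * (2*r)^n) < ENNReal.ofReal (v + ((2*r)^n - r^n)) := by
          calc ENNReal.ofReal (ρ * (2*r)^n)
              = ENNReal.ofReal ρ * volume (Metric.closedBall x r) := by
                rw [hvolB, ← ENNReal.ofReal_mul hρ0.le]
            _ < volume (A ∩ Metric.closedBall x r) := hABlt
            _ ≤ volume (A ∩ Dj) + (volume (Metric.closedBall x r) - volume Dj) := hsplit
            _ = ENNReal.ofReal (v + ((2*r)^n - r^n)) := by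
                rw [hvol_eq, hvolB, hvolDj, ← ENNReal.ofReal_sub _ (by positivity),
                  ← ENNReal.ofReal_add hv0 (by linarith)]
        have hreal : ρ * (2*r)^n < v + ((2*r)^n - r^n) :=
          (ENNReal.ofReal_lt_ofReal_iff_of_nonneg (by positivity)).1 hranges
        have hvDj : ENNReal.ofReal t * volume Dj < volume (E ∩ Dj) := by
          set rn : ℝ := r^n with hrn
          have hrn0 : 0 < rn := pow_pos hr0 n
          have h2rn : (2*r)^n = 2^n * rn := by rw [mul_pow, hrn]
          rw [h2rn] at hreal
          have hidentity : ρ * (2^n * rn) = 2^n*rn - ((1-t)/2) * rn := by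
            rw [hρ]; field_simp; ring
          have hprod : 0 < ((1-t)/2) * rn := mul_pos (by linarith) hrn0
          have hprod2 : 0 < ((1-t)/2) * rn := hprod
          have hkey : t * rn < v := by
            have H : ∀ P T R V : ℝ, P * (2^n * R) < V + (2^n*R - R) →
                P*(2^n*R) = 2^n*R - (1-T)/2*R → 0 < (1-T)/2*R → T*R < V := by
              intro P T R V h1 h2 h3; nlinarith [h1, h2, h3]
            exact H ρ t rn v hreal hidentity hprod
          calc ENNReal.ofReal t * volume Dj = ENNReal.ofReal (t * rn) := by
                rw [hvolDj, ← ENNReal.ofReal_mul ht0.le]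
            _ < ENNReal.ofReal v :=
                (ENNReal.ofReal_lt_ofReal_iff_of_nonneg (by positivity)).2 hkey
            _ = volume (A ∩ Dj) := hvol_eq.symm
            _ ≤ volume (E ∩ Dj) :=
                measure_mono (Set.inter_subset_inter_left _ Set.diff_subset)
        have hbadDj : Bad (j, m) := ⟨hj1, hmbox, hvDj⟩
        obtain ⟨q, hqmax, hsubq⟩ := claimA j (j, m) le_rfl hbadDj
        exact hxA.2 (Set.mem_iUnion.2 ⟨⟨q, hqmax⟩, hsubq hxD⟩)
      rw [ae_iff] at hfalse
      simp only [not_false_iff, Set.setOf_true] at hfalse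
      rw [Measure.restrict_apply_univ] at hfalse
      exact hA0 hfalse
    -- apply the inductive hypothesis on each maximal bad cube
    have hDfin : ∀ q : {p // MaxBad p}, nuW w (D q.1) ≠ ∞ := fun q =>
      ((measure_mono (hDQ q.1 q.2.1.2.1)).trans_lt hfin.lt_top).ne
    have hIH2 : ∀ q : {p // MaxBad p},
        nuW w (E ∩ D q.1) ≤ (1 - M⁻¹)^(k+1) * nuW w (D q.1) := by
      rintro ⟨⟨J, m⟩, hq⟩
      have hJ1 : 1 ≤ J := hq.1.1
      have hbox : ∀ i, m i < 2^J := hq.1.2.1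
      have hcast : ((2^J : ℕ) : ℝ) = 2^J := by push_cast; ring
      have h2J : (1:ℝ) ≤ 2^J := one_le_pow₀ (by norm_num)
      have hsidepos : 0 < s / ((2^J:ℕ):ℝ) := by rw [hcast]; positivity
      have hside1 : s / ((2^J:ℕ):ℝ) ≤ 1 := by
        rw [hcast, div_le_one (by positivity)]
        nlinarith
      have hvolD : volume (D (J,m)) = ENNReal.ofReal ((s/2^J)^n) := by
        show volume (subCube c s (2^J) m) = _
        rw [volume_subCube, ← ENNReal.ofReal_pow (by positivity), hcast]
      have hsizeD : volume (E ∩ D (J, m)) ≤ ENNReal.ofReal (β * lam^k) * volume (D (J,m)) := by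
        rcases eq_or_lt_of_le hJ1 with h1 | h2
        · -- level 1: compare with the whole cube Q
          have hvolQ : volume Q = ENNReal.ofReal (s^n) := by
            rw [hQdef, volume_cubeAt, ← ENNReal.ofReal_pow hs.le]
          have key : β * t * s^n ≤ β * lam^k * (s/2^J)^n := by
            rw [← h1]
            have hrw : (s/2^1)^n = s^n/2^n := by rw [div_pow]; norm_num
            rw [hrw, ht, pow_succ, hlam]
            calc β * (lam^k * (β/2^n)) * s^n = (β*lam^k*(s^n/2^n))*β := by ring
              _ ≤ (β*lam^k*(s^n/2^n))*1 :=
                  mul_le_mul_of_nonneg_left hβ1.le (by positivity)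
              _ = β*lam^k*(s^n/2^n) := mul_one _
          calc volume (E ∩ D (J,m)) ≤ volume E := measure_mono Set.inter_subset_left
            _ ≤ ENNReal.ofReal (β * t) * volume Q := hsize
            _ = ENNReal.ofReal (β * t * s^n) := by
                rw [hvolQ, ← ENNReal.ofReal_mul (by positivity)]
            _ ≤ ENNReal.ofReal (β * lam^k * (s/2^J)^n) := ENNReal.ofReal_le_ofReal key
            _ = ENNReal.ofReal (β * lam^k) * volume (D (J,m)) := by
                rw [hvolD, ← ENNReal.ofReal_mul (by positivity)]
        · -- level ≥ 2 : use that the parent cube is not bad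
          obtain ⟨J', rfl⟩ : ∃ J', J = J' + 1 := ⟨J-1, by omega⟩
          set P := anc (J'+1, m) J' with hP
          have hJ'1 : 1 ≤ J' := by omega
          have hnb := hq.2 J' hJ'1 (by omega)
          have hPbox : ∀ i, P.2 i < 2^J' := hanc_box (J'+1,m) hbox J' (by omega)
          have hvolP : volume (D P) = ENNReal.ofReal ((s/2^J')^n) := by
            show volume (subCube c s (2^J') _) = _
            rw [volume_subCube, ← ENNReal.ofReal_pow (by positivity)]
            congr 3
            push_cast; ring
          have hvol : volume (E ∩ D P) ≤ ENNReal.ofReal t * volume (D P) := by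
            by_contra hlt
            push_neg at hlt
            exact hnb ⟨hJ'1, hPbox, hlt⟩
          have heq : t * (s/2^J')^n = β * lam^k * (s/2^(J'+1))^n := by
            have hsplit2 : (s/2^J') = 2*(s/2^(J'+1)) := by
              rw [pow_succ]; field_simp
            have hx : (β/2^n) * 2^n = β := div_mul_cancel₀ β (by positivity : (0:ℝ) < 2^n).ne'
            rw [hsplit2, mul_pow]
            calc t * (2^n * (s/2^(J'+1))^n)
                = lam^k * ((β/2^n) * 2^n) * (s/2^(J'+1))^n := by rw [ht, pow_succ, hlam]; ring
              _ = β * lam^k * (s/2^(J'+1))^n := by rw [hx]; ring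
          calc volume (E ∩ D (J'+1,m))
              ≤ volume (E ∩ D P) :=
                measure_mono (Set.inter_subset_inter_right _
                  (hanc_sub (J'+1,m) J' (by omega)))
            _ ≤ ENNReal.ofReal t * volume (D P) := hvol
            _ = ENNReal.ofReal (t * (s/2^J')^n) := by
                rw [hvolP, ← ENNReal.ofReal_mul ht0.le]
            _ = ENNReal.ofReal (β * lam^k * (s/2^(J'+1))^n) := by rw [heq]
            _ = ENNReal.ofReal (β * lam^k) * volume (D (J'+1,m)) := by
                rw [hvolD, ← ENNReal.ofReal_mul (by positivity)]
      exact IH _ _ hsidepos hside1 (E ∩ D (J,m)) Set.inter_subset_right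
        (hEm.inter (hDm _)) (hDfin ⟨(J,m), hq⟩) hsizeD
    -- sum up
    have hdisjE : Pairwise (Function.onFun Disjoint (fun q : {p // MaxBad p} => E ∩ D q.1)) :=
      fun q1 q2 hne => ((hdisj hne).mono Set.inter_subset_right Set.inter_subset_right)
    have hsum : nuW w E ≤ (1 - M⁻¹)^(k+1) * nuW w U := by
      have hnull : nuW w (E \ U) = 0 :=
        withDensity_absolutelyContinuous volume _ claimC
      have hEU : nuW w E ≤ nuW w (E ∩ U) + nuW w (E \ U) := by
        calc nuW w E = nuW w ((E ∩ U) ∪ (E \ U)) := by rw [Set.inter_union_diff]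
          _ ≤ nuW w (E ∩ U) + nuW w (E \ U) := measure_union_le _ _
      rw [hnull, add_zero] at hEU
      refine hEU.trans ?_
      have hrw : E ∩ U = ⋃ q : {p // MaxBad p}, (E ∩ D q.1) := by
        rw [hU, Set.inter_iUnion]
      rw [hrw]
      calc nuW w (⋃ q : {p // MaxBad p}, (E ∩ D q.1))
          ≤ ∑' q : {p // MaxBad p}, nuW w (E ∩ D q.1) := measure_iUnion_le _
        _ ≤ ∑' q : {p // MaxBad p}, (1 - M⁻¹)^(k+1) * nuW w (D q.1) :=
            ENNReal.tsum_le_tsum hIH2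
        _ = (1 - M⁻¹)^(k+1) * ∑' q : {p // MaxBad p}, nuW w (D q.1) :=
            ENNReal.tsum_mul_left
        _ = (1 - M⁻¹)^(k+1) * nuW w U := by
            rw [hU, measure_iUnion hdisj (fun q => hDm _)]
    -- the union of maximal bad cubes occupies a small fraction of Q
    have htne : ENNReal.ofReal t ≠ 0 := by
      simp only [ne_eq, ENNReal.ofReal_eq_zero, not_le]; exact ht0
    have hvolU : volume U ≤ ENNReal.ofReal (1-α) * volume Q := by
      have h1 : volume U = ∑' q : {p // MaxBad p}, volume (D q.1) :=
        measure_iUnion hdisj (fun q => hDm _)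
      have h2 : ∀ q : {p // MaxBad p},
          volume (D q.1) ≤ (ENNReal.ofReal t)⁻¹ * volume (E ∩ D q.1) := by
        intro q
        calc volume (D q.1)
            = (ENNReal.ofReal t)⁻¹ * (ENNReal.ofReal t * volume (D q.1)) := by
              rw [← mul_assoc, ENNReal.inv_mul_cancel htne ofReal_ne_top, one_mul]
          _ ≤ (ENNReal.ofReal t)⁻¹ * volume (E ∩ D q.1) := by
              gcongr
              exact (q.2.1.2.2).le
      calc volume U = ∑' q : {p // MaxBad p}, volume (D q.1) := h1
        _ ≤ ∑' q : {p // MaxBad p}, (ENNReal.ofReal t)⁻¹ * volume (E ∩ D q.1) :=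
            ENNReal.tsum_le_tsum h2
        _ = (ENNReal.ofReal t)⁻¹ * ∑' q : {p // MaxBad p}, volume (E ∩ D q.1) :=
            ENNReal.tsum_mul_left
        _ = (ENNReal.ofReal t)⁻¹ * volume (⋃ q : {p // MaxBad p}, (E ∩ D q.1)) := by
            rw [measure_iUnion hdisjE (fun q => hEm.inter (hDm _))]
        _ ≤ (ENNReal.ofReal t)⁻¹ * volume E := by
            gcongr
            exact Set.iUnion_subset fun q => Set.inter_subset_left
        _ ≤ (ENNReal.ofReal t)⁻¹ * (ENNReal.ofReal (β * t) * volume Q) := by gcongr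
        _ = ENNReal.ofReal (1-α) * volume Q := by
            rw [ENNReal.ofReal_mul hβ0.le, ← mul_assoc, mul_comm (ENNReal.ofReal t)⁻¹,
              mul_assoc _ _ (ENNReal.ofReal t)⁻¹, ENNReal.mul_inv_cancel htne ofReal_ne_top,
              mul_one]
    have hUQ : U ⊆ Q := Set.iUnion_subset fun q => hDQ q.1 q.2.1.2.1
    have hbase := base_step hw hα0 hα1 hM0 hMt hyp c hs hs1 hUQ hUm hfin hvolU
    calc nuW w E ≤ (1 - M⁻¹)^(k+1) * nuW w U := hsum
      _ ≤ (1 - M⁻¹)^(k+1) * ((1 - M⁻¹) * nuW w Q) := by gcongr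
      _ = (1 - M⁻¹)^(k+1+1) * nuW w Q := by ring

open scoped Classical in
lemma small_final {w : Rn n → ℝ} (hw : Measurable w) {α : ℝ} (hα0 : 0 < α) (hα1 : α < 1)
    {M : ℝ≥0∞} (hM0 : M ≠ 0) (hMt : M ≠ ∞)
    (hyp : ∀ (c : Rn n) (s : ℝ), 0 < s → s ≤ 1 →
      ∀ F : Set (Rn n), F ⊆ cubeAt c s → MeasurableSet F →
        ENNReal.ofReal α * volume (cubeAt c s) ≤ volume F →
        (∫⁻ x in cubeAt c s, ENNReal.ofReal (w x)) ≤ M * ∫⁻ x in F, ENNReal.ofReal (w x)) :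
    ∃ δ : ℝ, 0 < δ ∧ ∃ C : ℝ≥0∞, 0 < C ∧ C < ∞ ∧
      ∀ (c : Rn n) (s : ℝ), 0 < s → s ≤ 1 →
        ∀ E : Set (Rn n), E ⊆ cubeAt c s → MeasurableSet E →
          nuW w E ≤ C * (volume E / volume (cubeAt c s)) ^ δ * nuW w (cubeAt c s) := by
  set β : ℝ := 1 - α with hβ
  have hβ0 : 0 < β := by simp only [hβ]; linarith
  have hβ1 : β < 1 := by simp only [hβ]; linarith
  set lam : ℝ := β / 2^n with hlam
  have h2n : (0:ℝ) < 2^n := by positivity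
  have h2n1 : (1:ℝ) ≤ 2^n := one_le_pow₀ (by norm_num)
  have hlam0 : 0 < lam := by positivity
  have hlam1 : lam < 1 := by rw [hlam, div_lt_one h2n]; linarith
  -- the contraction ratio
  set θ : ℝ≥0∞ := 1 - M⁻¹ with hθ
  set θr : ℝ := max θ.toReal (1/2) with hθr
  have hθt : θ ≠ ∞ := (tsub_le_self.trans_lt (by norm_num : (1:ℝ≥0∞) < ∞)).ne
  have hθlt1 : θ < 1 := by
    rw [hθ]
    refine ENNReal.sub_lt_self (by norm_num) (by norm_num) ?_
    simp only [ne_eq, ENNReal.inv_eq_zero]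
    exact hMt
  have hθr0 : 0 < θr := lt_of_lt_of_le (by norm_num) (le_max_right _ _)
  have hθr1 : θr < 1 := by
    rw [hθr, max_lt_iff]
    constructor
    · have h1 : θ.toReal < (1:ℝ≥0∞).toReal := ENNReal.toReal_strict_mono (by norm_num) hθlt1
      simpa using h1
    · norm_num
  have hθle : θ ≤ ENNReal.ofReal θr := by
    rw [← ENNReal.ofReal_toReal hθt]
    exact ENNReal.ofReal_le_ofReal (le_max_left _ _)
  -- the exponent
  set δ : ℝ := Real.log θr / Real.log lam with hδ
  have hlogθ : Real.log θr < 0 := Real.log_neg hθr0 hθr1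
  have hloglam : Real.log lam < 0 := Real.log_neg hlam0 hlam1
  have hδ0 : 0 < δ := div_pos_of_neg_of_neg hlogθ hloglam
  have hθlam : θr = lam ^ δ := by
    rw [Real.rpow_def_of_pos hlam0, hδ]
    have : Real.log lam * (Real.log θr / Real.log lam) = Real.log θr := by
      rw [mul_comm, div_mul_cancel₀ _ hloglam.ne]
    rw [this, Real.exp_log hθr0]
  refine ⟨δ, hδ0, ENNReal.ofReal ((β ^ δ)⁻¹), ?_, ofReal_lt_top, ?_⟩
  · rw [ENNReal.ofReal_pos]
    positivity
  intro c s hs hs1 E hE hEm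
  set Q := cubeAt c s with hQdef
  have hQm : MeasurableSet Q := measurableSet_cubeAt c s
  have hvolQ : volume Q = ENNReal.ofReal (s^n) := by
    rw [hQdef, volume_cubeAt, ← ENNReal.ofReal_pow hs.le]
  have hvolQ0 : volume Q ≠ 0 := by
    rw [hvolQ]; simp only [ne_eq, ENNReal.ofReal_eq_zero, not_le]; positivity
  have hvolQt : volume Q ≠ ∞ := by rw [hvolQ]; exact ofReal_ne_top
  by_cases hE0 : volume E = 0
  · have : nuW w E = 0 := withDensity_absolutelyContinuous volume _ hE0
    rw [this]; exact zero_le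
  have hEfin : volume E ≠ ∞ := ((measure_mono hE).trans_lt hvolQt.lt_top).ne
  have hu0 : volume E / volume Q ≠ 0 := by
    simp only [ne_eq, ENNReal.div_eq_zero_iff, not_or]
    exact ⟨hE0, hvolQt⟩
  by_cases hνQ : nuW w Q = ∞
  · rw [hνQ, ENNReal.mul_top ?hne]
    case hne =>
      simp only [ne_eq, mul_eq_zero, not_or]
      constructor
      · simp only [ENNReal.ofReal_eq_zero, not_le]; positivity
      · simp only [ENNReal.rpow_eq_zero_iff, not_or, not_and, not_lt]
        exact ⟨fun h => absurd h hu0, fun h => hδ0.le⟩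
    exact le_top
  -- main case
  have hEle : volume E ≤ volume Q := measure_mono hE
  set VQ : ℝ := (volume Q).toReal with hVQ
  have hVQ0 : 0 < VQ := ENNReal.toReal_pos hvolQ0 hvolQt
  set VE : ℝ := (volume E).toReal with hVE
  have hVE0 : 0 < VE := ENNReal.toReal_pos hE0 hEfin
  set t : ℝ := VE / VQ with htdef
  have ht0 : 0 < t := div_pos hVE0 hVQ0
  have ht1 : t ≤ 1 := by
    rw [htdef, div_le_one hVQ0]
    exact ENNReal.toReal_mono hvolQt hEle
  have hu : volume E / volume Q = ENNReal.ofReal t := by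
    rw [htdef, ENNReal.ofReal_div_of_pos hVQ0, hVE, hVQ,
      ENNReal.ofReal_toReal hEfin, ENNReal.ofReal_toReal hvolQt]
  have huδ : (volume E / volume Q) ^ δ = ENNReal.ofReal (t ^ δ) := by
    rw [hu, ← ENNReal.ofReal_rpow_of_pos ht0]
  by_cases htβ : β < t
  · -- trivial regime
    have h1le : (1:ℝ≥0∞) ≤ ENNReal.ofReal ((β ^ δ)⁻¹) * (volume E / volume Q) ^ δ := by
      rw [huδ, ← ENNReal.ofReal_mul (by positivity), ← ENNReal.ofReal_one]
      apply ENNReal.ofReal_le_ofReal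
      have hββ : β ^ δ ≤ t ^ δ := Real.rpow_le_rpow hβ0.le htβ.le hδ0.le
      calc (1:ℝ) = (β ^ δ)⁻¹ * β ^ δ := by
            rw [inv_mul_cancel₀ (by positivity : (β:ℝ) ^ δ ≠ 0)]
        _ ≤ (β ^ δ)⁻¹ * t ^ δ := by
            apply mul_le_mul_of_nonneg_left hββ (by positivity)
    calc nuW w E ≤ nuW w Q := measure_mono hE
      _ = 1 * nuW w Q := (one_mul _).symm
      _ ≤ ENNReal.ofReal ((β ^ δ)⁻¹) * (volume E / volume Q) ^ δ * nuW w Q := by gcongr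
  · -- power regime
    push_neg at htβ
    have hex : ∃ k, lam ^ (k+1) < t / β := by
      obtain ⟨N, hN⟩ := exists_pow_lt_of_lt_one (div_pos ht0 hβ0) hlam1
      exact ⟨N, lt_of_le_of_lt
        (pow_le_pow_of_le_one hlam0.le hlam1.le (by omega)) hN⟩
    obtain ⟨k, hklt, htle⟩ : ∃ k, lam^(k+1) < t/β ∧ t ≤ β * lam^k := by
      refine ⟨Nat.find hex, Nat.find_spec hex, ?_⟩
      rcases Nat.eq_zero_or_pos (Nat.find hex) with h0 | hpos
      · rw [h0, pow_zero, mul_one]; exact htβ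
      · have hmin := Nat.find_min hex (show Nat.find hex - 1 < Nat.find hex by omega)
        push_neg at hmin
        have hrw : Nat.find hex - 1 + 1 = Nat.find hex := by omega
        rw [hrw] at hmin
        calc t = (t/β) * β := by field_simp
          _ ≤ lam^(Nat.find hex) * β := mul_le_mul_of_nonneg_right hmin hβ0.le
          _ = β * lam^(Nat.find hex) := mul_comm _ _
    have hsize : volume E ≤ ENNReal.ofReal (β * lam^k) * volume Q := by
      have h1 : volume E = ENNReal.ofReal (t * VQ) := by
        rw [htdef, div_mul_cancel₀ _ hVQ0.ne', hVE, ENNReal.ofReal_toReal hEfin]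
      rw [h1]
      calc ENNReal.ofReal (t * VQ) ≤ ENNReal.ofReal ((β * lam^k) * VQ) := by
            apply ENNReal.ofReal_le_ofReal
            apply mul_le_mul_of_nonneg_right htle hVQ0.le
        _ = ENNReal.ofReal (β * lam^k) * ENNReal.ofReal VQ := by
            rw [ENNReal.ofReal_mul (by positivity)]
        _ = ENNReal.ofReal (β * lam^k) * volume Q := by
            rw [hVQ, ENNReal.ofReal_toReal hvolQt]
    have hmain := main_induction hw hα0 hα1 hM0 hMt hyp k c s hs hs1 E hE hEm hνQ hsize
    have hθpow : (1 - M⁻¹)^(k+1) ≤ ENNReal.ofReal (t^δ * (β^δ)⁻¹) := by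
      calc (1 - M⁻¹)^(k+1) ≤ (ENNReal.ofReal θr)^(k+1) := by
            apply pow_le_pow_left' hθle
        _ = ENNReal.ofReal (θr^(k+1)) := by
            rw [ENNReal.ofReal_pow hθr0.le]
        _ ≤ ENNReal.ofReal (t^δ * (β^δ)⁻¹) := by
            apply ENNReal.ofReal_le_ofReal
            have e1 : θr^(k+1) = (lam^(k+1)) ^ δ := by
              rw [hθlam, ← Real.rpow_natCast (lam ^ δ) (k+1),
                ← Real.rpow_natCast lam (k+1), ← Real.rpow_mul hlam0.le,
                ← Real.rpow_mul hlam0.le, mul_comm δ]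
            have e2 : (lam^(k+1) : ℝ) ^ δ ≤ (t/β) ^ δ :=
              Real.rpow_le_rpow (by positivity) hklt.le hδ0.le
            have e3 : (t/β : ℝ) ^ δ = t^δ * (β^δ)⁻¹ := by
              rw [Real.div_rpow ht0.le hβ0.le, div_eq_mul_inv]
            rw [e1, ← e3]
            exact e2
    calc nuW w E ≤ (1 - M⁻¹)^(k+1) * nuW w Q := hmain
      _ ≤ ENNReal.ofReal (t^δ * (β^δ)⁻¹) * nuW w Q := by gcongr
      _ = ENNReal.ofReal ((β ^ δ)⁻¹) * (volume E / volume Q) ^ δ * nuW w Q := by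
          rw [huδ, ← ENNReal.ofReal_mul (by positivity), mul_comm (t^δ)]


end AuxProofAloc

/-- **`A^{loc}_∞` weights satisfy a local comparison estimate (2.23).** -/
theorem aloc_infty_comparison (n : ℕ) (hn : 0 < n) (w : Rn n → ℝ)
    (hw : IsWeight w) (hAinf : MemAlocInfty n w) (a : ℝ) (ha : 0 < a) :
    ∃ C : ℝ≥0∞, 0 < C ∧ C < ∞ ∧ ∃ δ : ℝ, 0 < δ ∧
      ∀ (c : Rn n) (s : ℝ), 0 < s → s ≤ a →
        ∀ F : Set (Rn n), F ⊆ cubeAt c s → MeasurableSet F →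
          (∫⁻ x in F, ENNReal.ofReal (w x)) / (∫⁻ x in cubeAt c s, ENNReal.ofReal (w x)) ≤
            C * (volume F / volume (cubeAt c s)) ^ δ := by
  obtain ⟨α, hα, M, hMlt, hyp⟩ := hAinf
  have hyp' : ∀ (c : Rn n) (s : ℝ), 0 < s → s ≤ 1 →
      ∀ F : Set (Rn n), F ⊆ cubeAt c s → MeasurableSet F →
        ENNReal.ofReal α * volume (cubeAt c s) ≤ volume F →
        (∫⁻ x in cubeAt c s, ENNReal.ofReal (w x)) ≤ (M+1) * ∫⁻ x in F, ENNReal.ofReal (w x) :=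
    fun c s hs hs1 F hF hFm hvol =>
      (hyp c s hs hs1 F hF hFm hvol).trans
        (mul_le_mul_left (le_add_right le_rfl) _)
  have hM0 : M + 1 ≠ 0 := by simp
  have hMt : M + 1 ≠ ∞ := by
    simp only [ne_eq, ENNReal.add_eq_top, not_or]
    exact ⟨hMlt.ne, by norm_num⟩
  obtain ⟨δ, hδ0, C, hC0, hCt, hbound⟩ := small_final hw.1 hα.1 hα.2 hM0 hMt hyp'
  set K : ℕ := ⌈a⌉₊ with hKdef
  have hK0 : 0 < K := Nat.ceil_pos.2 ha
  have hKa : a ≤ K := Nat.le_ceil a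
  have hKr : (0:ℝ) < K := by exact_mod_cast hK0
  have hKn0 : (0:ℝ) < (K:ℝ)^n := by positivity
  have hofK0 : (0:ℝ≥0∞) < ENNReal.ofReal ((K:ℝ)^n) := ENNReal.ofReal_pos.2 hKn0
  set C' : ℝ≥0∞ := ENNReal.ofReal ((K:ℝ)^n) * ENNReal.ofReal ((K:ℝ)^n) ^ δ * C with hC'
  have hC'0 : 0 < C' :=
    ENNReal.mul_pos (ENNReal.mul_pos hofK0.ne'
      (ENNReal.rpow_pos hofK0 ofReal_ne_top).ne').ne' hC0.ne'
  have hC't : C' < ∞ :=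
    ENNReal.mul_lt_top (ENNReal.mul_lt_top ofReal_lt_top
      (ENNReal.rpow_lt_top_of_nonneg hδ0.le ofReal_ne_top)) hCt
  refine ⟨C', hC'0, hC't, δ, hδ0, ?_⟩
  intro c s hs hsa F hF hFm
  rw [show (∫⁻ x in F, ENNReal.ofReal (w x)) = nuW w F from (nuW_apply hw.1 hFm).symm,
    show (∫⁻ x in cubeAt c s, ENNReal.ofReal (w x)) = nuW w (cubeAt c s) from
      (nuW_apply hw.1 (measurableSet_cubeAt c s)).symm]
  set Q := cubeAt c s with hQdef
  have hQm : MeasurableSet Q := measurableSet_cubeAt c s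
  have hvolQ : volume Q = ENNReal.ofReal (s^n) := by
    rw [hQdef, volume_cubeAt, ← ENNReal.ofReal_pow hs.le]
  have hvolQ0 : volume Q ≠ 0 := by
    rw [hvolQ]; simp only [ne_eq, ENNReal.ofReal_eq_zero, not_le]; positivity
  have hvolQt : volume Q ≠ ∞ := by rw [hvolQ]; exact ofReal_ne_top
  by_cases hνQ : nuW w Q = ∞
  · rw [hνQ, ENNReal.div_top]; exact zero_le
  have hside0 : 0 < s / (K:ℝ) := by positivity
  have hside1 : s / (K:ℝ) ≤ 1 := by
    rw [div_le_one hKr]; linarith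
  -- the K-adic subdivision of Q
  have hQg_vol : ∀ m : Fin n → ℕ, volume (subCube c s K m) = ENNReal.ofReal ((s/(K:ℝ))^n) := by
    intro m
    rw [volume_subCube, ← ENNReal.ofReal_pow (by positivity)]
  have hQeq : ∀ m : Fin n → ℕ,
      volume Q = ENNReal.ofReal ((K:ℝ)^n) * volume (subCube c s K m) := by
    intro m
    rw [hvolQ, hQg_vol m, ← ENNReal.ofReal_mul (by positivity)]
    congr 1
    rw [div_pow, mul_div_cancel₀]
    positivity
  have hSub : ∀ g : Fin n → Fin K, nuW w (F ∩ subCube c s K (fun i => (g i : ℕ)))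
      ≤ C * ENNReal.ofReal ((K:ℝ)^n) ^ δ * ((volume F / volume Q) ^ δ * nuW w Q) := by
    intro g
    set m : Fin n → ℕ := fun i => (g i : ℕ) with hm
    have hbox : ∀ i, m i < K := fun i => (g i).2
    have hQgQ : subCube c s K m ⊆ Q := subCube_subset c hs hK0 hbox
    have hQg := hbound (fun i => c i + s * (m i : ℝ) / (K:ℝ)) (s/(K:ℝ)) hside0 hside1
      (F ∩ subCube c s K m) Set.inter_subset_right (hFm.inter (measurableSet_cubeAt _ _))
    have hcube_eq : cubeAt (fun i => c i + s * (m i : ℝ) / (K:ℝ)) (s/(K:ℝ))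
        = subCube c s K m := rfl
    rw [hcube_eq] at hQg
    have hratio : volume (F ∩ subCube c s K m) / volume (subCube c s K m)
        ≤ ENNReal.ofReal ((K:ℝ)^n) * (volume F / volume Q) := by
      have hQgne : volume (subCube c s K m) ≠ 0 := by
        rw [hQg_vol m]
        simp only [ne_eq, ENNReal.ofReal_eq_zero, not_le]
        positivity
      calc volume (F ∩ subCube c s K m) / volume (subCube c s K m)
          ≤ volume F / volume (subCube c s K m) := by
            gcongr
            exact Set.inter_subset_left
        _ = ENNReal.ofReal ((K:ℝ)^n) * volume F /
              (ENNReal.ofReal ((K:ℝ)^n) * volume (subCube c s K m)) :=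
            (ENNReal.mul_div_mul_left _ _ hofK0.ne' ofReal_ne_top).symm
        _ = ENNReal.ofReal ((K:ℝ)^n) * volume F / volume Q := by rw [← hQeq m]
        _ = ENNReal.ofReal ((K:ℝ)^n) * (volume F / volume Q) := by
            rw [mul_div_assoc]
    calc nuW w (F ∩ subCube c s K m)
        ≤ C * (volume (F ∩ subCube c s K m) / volume (subCube c s K m)) ^ δ *
            nuW w (subCube c s K m) := hQg
      _ ≤ C * (ENNReal.ofReal ((K:ℝ)^n) * (volume F / volume Q)) ^ δ * nuW w Q := by
          gcongr
      _ = C * ENNReal.ofReal ((K:ℝ)^n) ^ δ * ((volume F / volume Q) ^ δ * nuW w Q) := by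
          rw [ENNReal.mul_rpow_of_nonneg _ _ hδ0.le]
          ring
  -- covering estimate
  have hkey : nuW w F ≤ C' * (volume F / volume Q) ^ δ * nuW w Q := by
    set UU := ⋃ g : Fin n → Fin K, subCube c s K (fun i => (g i : ℕ)) with hUU
    have h0 : nuW w (F \ UU) = 0 := by
      apply withDensity_absolutelyContinuous volume _
      apply measure_mono_null ?_ (volume_gridSet c s K)
      intro x hx
      rcases cover_subCube c hs hK0 (hF hx.1) with h | h
      · exfalso
        apply hx.2
        obtain ⟨m, hm, hmem⟩ := Set.mem_iUnion₂.1 h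
        exact Set.mem_iUnion.2 ⟨fun i => ⟨m i, hm i⟩, hmem⟩
      · exact h
    have hcard : ((Fintype.card (Fin n → Fin K) : ℕ) : ℝ≥0∞)
        = ENNReal.ofReal ((K:ℝ)^n) := by
      rw [← ENNReal.ofReal_natCast]
      congr 1
      rw [Fintype.card_fun]
      push_cast
      simp
    calc nuW w F = nuW w ((F ∩ UU) ∪ (F \ UU)) := by rw [Set.inter_union_diff]
      _ ≤ nuW w (F ∩ UU) + nuW w (F \ UU) := measure_union_le _ _
      _ = nuW w (F ∩ UU) := by rw [h0, add_zero]
      _ = nuW w (⋃ g : Fin n → Fin K, (F ∩ subCube c s K (fun i => (g i : ℕ)))) := by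
          rw [hUU, Set.inter_iUnion]
      _ ≤ ∑' g : Fin n → Fin K, nuW w (F ∩ subCube c s K (fun i => (g i : ℕ))) :=
          measure_iUnion_le _
      _ ≤ ∑' _g : Fin n → Fin K,
            C * ENNReal.ofReal ((K:ℝ)^n) ^ δ * ((volume F / volume Q) ^ δ * nuW w Q) :=
          ENNReal.tsum_le_tsum hSub
      _ = (Fintype.card (Fin n → Fin K) : ℝ≥0∞) *
            (C * ENNReal.ofReal ((K:ℝ)^n) ^ δ * ((volume F / volume Q) ^ δ * nuW w Q)) := by
          rw [tsum_fintype, Finset.sum_const, Finset.card_univ, nsmul_eq_mul]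
      _ = C' * (volume F / volume Q) ^ δ * nuW w Q := by
          rw [hcard, hC']
          ring
  have hνQ0 : nuW w Q ≠ 0 := (nuW_cube_pos hw.1 hw.2 c hs).ne'
  rw [ENNReal.div_le_iff hνQ0 hνQ]
  exact hkey


end
end
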